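/- arXiv:2411.11967 — 10 statements merged into one kernel-verified Lean document; each statement's English description precedes it below -/
import Mathlib

section
/- Let G be a finite commutative group, let Ĝ be the group of characters G →* ℂˣ, and let β : G × G → ℂˣ be an alternating bicharacter (bimultiplicative in each argument with β(g,g) = 1 for all g). Then the map L_β : Ĝ × G → Ĝ × G defined by L_β(e,m) := (e · β(m,·), m) is a group automorphism of Ĝ × G, and it preserves the topological spin: θ(L_β(e,m)) = θ(e,m) for all (e,m), where θ(e,m) := e(m). -/
/-- for a finite commutative group `G` and an alternating bicharacter
`β : G × G → ℂˣ`, the flux-preserving map `L_β (e, m) := (e · β(m,·), m)` on the anyon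
group `Ĝ × G` is a group automorphism preserving the topological spin `θ(e,m) = e m`. -/
theorem flux_preserving_map_is_spin_preserving_automorphism
    {G : Type*} [CommGroup G] [Fintype G]
    (β : G → G → ℂˣ)
    (hβ₁ : ∀ g g' h : G, β (g * g') h = β g h * β g' h)
    (hβ₂ : ∀ g h h' : G, β g (h * h') = β g h * β g h')
    (hβalt : ∀ g : G, β g g = 1)
    (L : (G →* ℂˣ) × G → (G →* ℂˣ) × G)
    (hLfst : ∀ (e : G →* ℂˣ) (m h : G), (L (e, m)).1 h = e h * β m h)
    (hLsnd : ∀ (e : G →* ℂˣ) (m : G), (L (e, m)).2 = m) :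
    Function.Bijective L ∧
    (∀ x y : (G →* ℂˣ) × G, L (x * y) = L x * L y) ∧
    (∀ x : (G →* ℂˣ) × G, (L x).1 (L x).2 = x.1 x.2) := by
  have hβone : ∀ m : G, β m 1 = 1 := by
    intro m
    have h := hβ₂ m 1 1
    rw [mul_one] at h
    exact left_eq_mul.mp h
  refine ⟨⟨?_, ?_⟩, ?_, ?_⟩
  · rintro ⟨e, m⟩ ⟨e', m'⟩ h
    have hm : m = m' := by
      rw [← hLsnd e m, ← hLsnd e' m', h]
    subst hm
    have he : e = e' := by
      ext g
      have h1 := hLfst e m g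
      have h2 := hLfst e' m g
      rw [h, h2] at h1
      exact congrArg Units.val (mul_right_cancel h1).symm
    rw [he]
  · rintro ⟨f, m⟩
    refine ⟨(⟨⟨fun h => f h * (β m h)⁻¹, by simp [hβone]⟩,
      fun a b => by
        simp only [map_mul, hβ₂, mul_inv]
        exact (mul_mul_mul_comm _ _ _ _)⟩, m), ?_⟩
    apply Prod.ext
    · ext g
      rw [hLfst]
      simp
    · rw [hLsnd]
  · rintro ⟨e, m⟩ ⟨e', m'⟩
    apply Prod.ext
    · ext g
      show ((L ((e, m) * (e', m'))).1 g : ℂ) = ((L (e, m)).1 g * (L (e', m')).1 g : ℂˣ)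
      have : ((e, m) * (e', m') : (G →* ℂˣ) × G) = (e * e', m * m') := rfl
      rw [this, hLfst, hLfst, hLfst]
      have : (e * e') g * β (m * m') g = e g * β m g * (e' g * β m' g) := by
        rw [hβ₁, MonoidHom.mul_apply]
        exact mul_mul_mul_comm _ _ _ _
      exact congrArg Units.val this
    · show (L ((e, m) * (e', m'))).2 = (L (e, m)).2 * (L (e', m')).2
      have : ((e, m) * (e', m') : (G →* ℂˣ) × G) = (e * e', m * m') := rfl
      rw [this, hLsnd, hLsnd, hLsnd]
  · rintro ⟨e, m⟩
    rw [hLsnd, hLfst, hβalt]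
    simp
end

section
/- Let G be a finite commutative group, Ĝ its character group, let β₁, β₂ : G × G → ℂˣ be alternating bicharacters and B : G × G → ℂˣ a bicharacter. Define the set of condensed anyon pairs D := { ( (β₁(m,·)·B(·,m'), m), (B(m,·)·β₂(m',·), m') ) : m, m' ∈ G } ⊆ (Ĝ × G) × (Ĝ × G). Then D is the graph of a bijection from Ĝ × G to Ĝ × G if and only if B is nondegenerate (i.e. B(g,·) ≡ 1 implies g = 1 and B(·,h) ≡ 1 implies h = 1). This is the anyon-level content of Lemma 1: in the 2d quantum double of a finite Abelian group G, an SPT-sewn domain wall constructed from a G×G SPT with 2-cocycle ν = ω₁·η·ω₂ is invertible if and only if the type-II part η of ν is nondegenerate. -/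
/-- Build a `MonoidHom` into `ℂˣ` from a multiplicative map. -/
def mkUHom {G : Type*} [CommGroup G] (f : G → ℂˣ)
    (hf : ∀ g h : G, f (g * h) = f g * f h) : G →* ℂˣ where
  toFun := f
  map_one' := by
    have h1 : f 1 = f 1 * f 1 := by simpa using hf 1 1
    exact left_eq_mul.mp h1
  map_mul' := hf

@[simp] lemma mkUHom_apply {G : Type*} [CommGroup G] (f : G → ℂˣ)
    (hf : ∀ g h : G, f (g * h) = f g * f h) (g : G) : mkUHom f hf g = f g := rfl


/-- anyon-level content of Lemma 1: the set `D` of condensed anyon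
pairs of a `G×G` SPT-sewn domain wall with cocycle `ν = ω₁·η·ω₂` (with `βᵢ` the
antisymmetrization of `ωᵢ` and `B` the pairing of the type-II part `η`) is the
graph of a bijection of the anyon group `Ĝ × G` if and only if `B` is
nondegenerate. -/
theorem sewn_domain_wall_invertible_iff_type_II_nondegenerate
    {G : Type*} [CommGroup G] [Fintype G]
    (β₁ β₂ B : G → G → ℂˣ)
    (hβ₁l : ∀ g g' h : G, β₁ (g * g') h = β₁ g h * β₁ g' h)
    (hβ₁r : ∀ g h h' : G, β₁ g (h * h') = β₁ g h * β₁ g h')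
    (hβ₁alt : ∀ g : G, β₁ g g = 1)
    (hβ₂l : ∀ g g' h : G, β₂ (g * g') h = β₂ g h * β₂ g' h)
    (hβ₂r : ∀ g h h' : G, β₂ g (h * h') = β₂ g h * β₂ g h')
    (hβ₂alt : ∀ g : G, β₂ g g = 1)
    (hBl : ∀ g g' h : G, B (g * g') h = B g h * B g' h)
    (hBr : ∀ g h h' : G, B g (h * h') = B g h * B g h') :
    (∃ F : (G →* ℂˣ) × G → (G →* ℂˣ) × G, Function.Bijective F ∧
        {p : ((G →* ℂˣ) × G) × ((G →* ℂˣ) × G) |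
          ∃ m m' : G, p.1.2 = m ∧ p.2.2 = m' ∧
            (∀ h : G, p.1.1 h = β₁ m h * B h m') ∧
            (∀ h : G, p.2.1 h = B m h * β₂ m' h)} =
          {p : ((G →* ℂˣ) × G) × ((G →* ℂˣ) × G) | p.2 = F p.1}) ↔
    ((∀ g : G, (∀ h : G, B g h = 1) → g = 1) ∧
     (∀ h : G, (∀ g : G, B g h = 1) → h = 1)) := by
  -- basic normalization lemmas
  have hB1l : ∀ h : G, B 1 h = 1 := by
    intro h
    have h1 := hBl 1 1 h
    rw [one_mul] at h1
    exact left_eq_mul.mp h1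
  have hB1r : ∀ g : G, B g 1 = 1 := by
    intro g
    have h1 := hBr g 1 1
    rw [one_mul] at h1
    exact left_eq_mul.mp h1
  have hβ₁1l : ∀ h : G, β₁ 1 h = 1 := by
    intro h
    have h1 := hβ₁l 1 1 h
    rw [one_mul] at h1
    exact left_eq_mul.mp h1
  have hβ₂1l : ∀ h : G, β₂ 1 h = 1 := by
    intro h
    have h1 := hβ₂l 1 1 h
    rw [one_mul] at h1
    exact left_eq_mul.mp h1
  -- the left and right condensed characters
  set L : G → G → (G →* ℂˣ) := fun m m' => mkUHom (fun h => β₁ m h * B h m')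
    (fun g h => by rw [hβ₁r, hBl, mul_mul_mul_comm]) with hL
  set R : G → G → (G →* ℂˣ) := fun m m' => mkUHom (fun h => B m h * β₂ m' h)
    (fun g h => by rw [hBr, hβ₂r, mul_mul_mul_comm]) with hR
  constructor
  · rintro ⟨F, hFbij, hset⟩
    have hmem : ∀ m m' : G, (R m m', m') = F (L m m', m) := by
      intro m m'
      have : ((L m m', m), (R m m', m')) ∈
          {p : ((G →* ℂˣ) × G) × ((G →* ℂˣ) × G) |
            ∃ m m' : G, p.1.2 = m ∧ p.2.2 = m' ∧
              (∀ h : G, p.1.1 h = β₁ m h * B h m') ∧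
              (∀ h : G, p.2.1 h = B m h * β₂ m' h)} :=
        ⟨m, m', rfl, rfl, fun h => rfl, fun h => rfl⟩
      rw [hset] at this
      exact this
    constructor
    · intro g hg
      have hR' : R 1 1 = R g 1 := by
        ext h
        simp [hR, hB1l, hg]
      have key : F (L 1 1, 1) = F (L g 1, g) := by
        rw [← hmem 1 1, ← hmem g 1, hR']
      have := hFbij.injective key
      exact (congrArg Prod.snd this).symm
    · intro h hh
      have hL' : L 1 1 = L 1 h := by
        ext x
        simp [hL, hβ₁1l, hB1r, hh]
      have key : (R 1 1, (1 : G)) = (R 1 h, h) := by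
        rw [hmem 1 1, hmem 1 h, hL']
      exact (congrArg Prod.snd key).symm
  · rintro ⟨hnd₁, hnd₂⟩
    -- duality: G ≅ (G →* ℂˣ)
    haveI : NeZero ((Monoid.exponent G : ℕ) : ℂ) := by
      refine ⟨?_⟩
      exact_mod_cast (Nat.cast_ne_zero (R := ℂ)).mpr (Monoid.exponent_ne_zero_of_finite)
    obtain ⟨e⟩ := CommGroup.monoidHom_mulEquiv_of_hasEnoughRootsOfUnity G ℂ
    haveI : Finite (G →* ℂˣ) := Finite.of_equiv G e.symm.toEquiv
    have hcard : Nat.card G = Nat.card (G →* ℂˣ) := Nat.card_congr e.toEquiv.symm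
    -- the two pairing homomorphisms
    set eL : G →* (G →* ℂˣ) :=
      { toFun := fun m => mkUHom (B m) (hBr m)
        map_one' := by ext h; simp [hB1l]
        map_mul' := fun m n => by ext h; simp [hBl] } with heL
    set eR : G →* (G →* ℂˣ) :=
      { toFun := fun m' => mkUHom (fun h => B h m') (fun g h => by rw [hBl])
        map_one' := by ext h; simp [hB1r]
        map_mul' := fun m n => by ext h; simp [hBr] } with heR
    have heLinj : Function.Injective eL := by
      rw [injective_iff_map_eq_one]
      intro g hg
      exact hnd₁ g (fun h => by simpa [heL] using DFunLike.congr_fun hg h)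
    have heRinj : Function.Injective eR := by
      rw [injective_iff_map_eq_one]
      intro g hg
      exact hnd₂ g (fun h => by simpa [heR] using DFunLike.congr_fun hg h)
    have heLbij : Function.Bijective eL :=
      (Nat.bijective_iff_injective_and_card eL).mpr ⟨heLinj, hcard⟩
    have heRbij : Function.Bijective eR :=
      (Nat.bijective_iff_injective_and_card eR).mpr ⟨heRinj, hcard⟩
    set EL : G ≃ (G →* ℂˣ) := Equiv.ofBijective eL heLbij with hEL
    set ER : G ≃ (G →* ℂˣ) := Equiv.ofBijective eR heRbij with hER
    have hELs : ∀ x : G, EL.symm (eL x) = x := fun x => EL.symm_apply_apply x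
    have hERs : ∀ x : G, ER.symm (eR x) = x := fun x => ER.symm_apply_apply x
    have hELa : ∀ χ : G →* ℂˣ, eL (EL.symm χ) = χ := fun χ => EL.apply_symm_apply χ
    have hERa : ∀ χ : G →* ℂˣ, eR (ER.symm χ) = χ := fun χ => ER.apply_symm_apply χ
    set b₁ : G → (G →* ℂˣ) := fun m => mkUHom (β₁ m) (hβ₁r m) with hb₁
    set b₂ : G → (G →* ℂˣ) := fun m' => mkUHom (β₂ m') (hβ₂r m') with hb₂
    refine ⟨fun p => (eL p.2 * b₂ (ER.symm (p.1 * (b₁ p.2)⁻¹)), ER.symm (p.1 * (b₁ p.2)⁻¹)),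
        ?_, ?_⟩
    · -- bijectivity via explicit inverse
      refine Function.bijective_iff_has_inverse.mpr
        ⟨fun q => (b₁ (EL.symm (q.1 * (b₂ q.2)⁻¹)) * eR q.2, EL.symm (q.1 * (b₂ q.2)⁻¹)), ?_, ?_⟩
      · rintro ⟨χ, m⟩
        dsimp only
        have h0 : eL m * b₂ (ER.symm (χ * (b₁ m)⁻¹)) * (b₂ (ER.symm (χ * (b₁ m)⁻¹)))⁻¹
            = eL m := by
          refine MonoidHom.ext fun h => ?_
          show eL m h * b₂ (ER.symm (χ * (b₁ m)⁻¹)) h * (b₂ (ER.symm (χ * (b₁ m)⁻¹)) h)⁻¹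
            = eL m h
          exact mul_inv_cancel_right _ _
        rw [h0, hELs m, hERa (χ * (b₁ m)⁻¹)]
        have h2 : b₁ m * (χ * (b₁ m)⁻¹) = χ := by
          refine MonoidHom.ext fun h => ?_
          show b₁ m h * (χ h * (b₁ m h)⁻¹) = χ h
          exact mul_mul_inv_cancel'_right _ _
        rw [h2]
      · rintro ⟨χ', m'⟩
        dsimp only
        have h0 : b₁ (EL.symm (χ' * (b₂ m')⁻¹)) * eR m' * (b₁ (EL.symm (χ' * (b₂ m')⁻¹)))⁻¹
            = eR m' := by
          refine MonoidHom.ext fun h => ?_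
          show b₁ (EL.symm (χ' * (b₂ m')⁻¹)) h * eR m' h * (b₁ (EL.symm (χ' * (b₂ m')⁻¹)) h)⁻¹
            = eR m' h
          rw [mul_assoc]
          exact mul_mul_inv_cancel'_right _ _
        rw [h0, hERs m', hELa (χ' * (b₂ m')⁻¹)]
        have h2 : χ' * (b₂ m')⁻¹ * b₂ m' = χ' := by
          refine MonoidHom.ext fun h => ?_
          show χ' h * (b₂ m' h)⁻¹ * b₂ m' h = χ' h
          exact inv_mul_cancel_right _ _
        rw [h2]
    · -- the set D is exactly the graph
      ext ⟨⟨χ, m⟩, ⟨χ', m'⟩⟩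
      simp only [Set.mem_setOf_eq]
      constructor
      · rintro ⟨m₀, m₀', hm, hm', hleft, hright⟩
        subst hm; subst hm'
        have hkey : χ * (b₁ m)⁻¹ = eR m' := by
          refine MonoidHom.ext fun h => ?_
          show χ h * (β₁ m h)⁻¹ = B h m'
          rw [hleft h, mul_assoc]
          exact mul_mul_inv_cancel'_right _ _
        have hsymm : ER.symm (χ * (b₁ m)⁻¹) = m' := by rw [hkey, hERs]
        refine Prod.ext ?_ ?_
        · show χ' = eL m * b₂ (ER.symm (χ * (b₁ m)⁻¹))
          rw [hsymm]
          refine MonoidHom.ext fun h => ?_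
          exact hright h
        · show m' = ER.symm (χ * (b₁ m)⁻¹)
          exact hsymm.symm
      · intro hp
        have hp1 : χ' = eL m * b₂ (ER.symm (χ * (b₁ m)⁻¹)) := congrArg Prod.fst hp
        have hp2 : m' = ER.symm (χ * (b₁ m)⁻¹) := congrArg Prod.snd hp
        refine ⟨m, m', rfl, rfl, ?_, ?_⟩
        · intro h
          have hERm' : eR m' = χ * (b₁ m)⁻¹ := by rw [hp2, hERa]
          have hx : B h m' = χ h * (β₁ m h)⁻¹ := DFunLike.congr_fun hERm' h
          rw [hx]
          exact (mul_mul_inv_cancel'_right _ _).symm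
        · intro h
          have hχ' : χ' = eL m * b₂ m' := by rw [hp1, ← hp2]
          exact DFunLike.congr_fun hχ' h
end

section
/- Fix n ≥ 1 and let q : 𝔽₂ⁿ × 𝔽₂ⁿ → 𝔽₂ be the quadratic form q(z,x) := Σᵢ zᵢ·xᵢ. Then the group of 𝔽₂-linear automorphisms T of 𝔽₂ⁿ ⊕ 𝔽₂ⁿ satisfying q(T(z,x)) = q(z,x) for all (z,x) is generated by the following elements: (i) the maps (z,x) ↦ (z + Γx, x) for Γ an n×n symmetric matrix over 𝔽₂ with zero diagonal; (ii) the maps (z,x) ↦ ((Aᵀ)⁻¹z, Ax) for A ∈ GL(n, 𝔽₂); (iii) for each subset S ⊆ {1,…,n}, the partial swap U_S sending (z,x) to (z',x') with z'ᵢ = xᵢ and x'ᵢ = zᵢ for i ∈ S, and z'ᵢ = zᵢ, x'ᵢ = xᵢ otherwise. -/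
open Matrix

namespace SpinGen

abbrev V (n : ℕ) := (Fin n → ZMod 2) × (Fin n → ZMod 2)

variable {n : ℕ}

def Q (v : V n) : ZMod 2 := ∑ i, v.1 i * v.2 i
def B (u v : V n) : ZMod 2 := ∑ i, (u.1 i * v.2 i + v.1 i * u.2 i)

lemma z2_add_self (a : ZMod 2) : a + a = 0 := by fin_cases a <;> decide
lemma z2_sq (a : ZMod 2) : a * a = a := by fin_cases a <;> rfl
lemma z2_cases (a : ZMod 2) : a = 0 ∨ a = 1 := by
  fin_cases a
  · exact Or.inl rfl
  · exact Or.inr rfl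
lemma z2_ne_one (a : ZMod 2) (h : ¬ a = 1) : a = 0 := by
  rcases z2_cases a with h0 | h1 <;> tauto
lemma z2_ne_zero (a : ZMod 2) (h : ¬ a = 0) : a = 1 := by
  rcases z2_cases a with h0 | h1 <;> tauto

lemma z2_aab (a b : ZMod 2) : a + (a + b) = b := by fin_cases a <;> fin_cases b <;> rfl
lemma z2_bab (a b : ZMod 2) : b + (a + b) = a := by fin_cases a <;> fin_cases b <;> rfl

lemma Q_add (u v : V n) : Q (u + v) = Q u + Q v + B u v := by
  simp only [Q, B, Prod.fst_add, Prod.snd_add, Pi.add_apply, ← Finset.sum_add_distrib]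
  exact Finset.sum_congr rfl fun i _ => by ring

lemma B_comm (u v : V n) : B u v = B v u := by
  simp only [B]; exact Finset.sum_congr rfl fun i _ => by ring

lemma B_self (v : V n) : B v v = 0 := by
  simp only [B]
  rw [Finset.sum_eq_zero]
  intro i _; rw [mul_comm]; exact z2_add_self _

lemma B_add_left (u v w : V n) : B (u + v) w = B u w + B v w := by
  simp only [B, Prod.fst_add, Prod.snd_add, Pi.add_apply, ← Finset.sum_add_distrib]
  exact Finset.sum_congr rfl fun i _ => by ring

lemma B_add_right (u v w : V n) : B u (v + w) = B u v + B u w := by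
  rw [B_comm, B_add_left, B_comm v u, B_comm w u]

lemma B_smul_left (c : ZMod 2) (u w : V n) : B (c • u) w = c * B u w := by
  simp only [B, Prod.smul_fst, Prod.smul_snd, Pi.smul_apply, smul_eq_mul, Finset.mul_sum]
  exact Finset.sum_congr rfl fun i _ => by ring

lemma B_smul_right (c : ZMod 2) (u w : V n) : B u (c • w) = c * B u w := by
  rw [B_comm, B_smul_left, B_comm]

lemma Q_smul (c : ZMod 2) (v : V n) : Q (c • v) = c * Q v := by
  simp only [Q, Prod.smul_fst, Prod.smul_snd, Pi.smul_apply, smul_eq_mul, Finset.mul_sum]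
  refine Finset.sum_congr rfl fun i _ => ?_
  rw [show c * v.1 i * (c * v.2 i) = c * c * (v.1 i * v.2 i) by ring, z2_sq]

lemma B_zero_left (v : V n) : B 0 v = 0 := by
  simp only [B, Prod.fst_zero, Prod.snd_zero, Pi.zero_apply, mul_zero, zero_mul, add_zero,
    Finset.sum_const_zero]

def del (j : Fin n) : Fin n → ZMod 2 := fun i => if i = j then 1 else 0

def ee (j : Fin n) : V n := (del j, 0)
def ff (j : Fin n) : V n := (0, del j)

lemma dot_del (x : Fin n → ZMod 2) (j : Fin n) : x ⬝ᵥ del j = x j := by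
  simp [dotProduct, del]

lemma del_dot (x : Fin n → ZMod 2) (j : Fin n) : del j ⬝ᵥ x = x j := by
  simp [dotProduct, del]

lemma B_e_left (i : Fin n) (v : V n) : B (ee i) v = v.2 i := by
  simp [B, ee, del]

lemma B_f_left (i : Fin n) (v : V n) : B (ff i) v = v.1 i := by
  simp [B, ff, del]

lemma Q_e (i : Fin n) : Q (ee i) = 0 := by simp [Q, ee]
lemma Q_f (i : Fin n) : Q (ff i) = 0 := by simp [Q, ff]

def mk (f : V n →ₗ[ZMod 2] V n) (h : ∀ x, f (f x) = x) : V n ≃ₗ[ZMod 2] V n :=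
  LinearEquiv.ofLinear f f (LinearMap.ext h) (LinearMap.ext h)

@[simp] lemma mk_apply (f : V n →ₗ[ZMod 2] V n) (h) (x : V n) : mk f h x = f x := rfl

lemma vecMulVec_mulVec (u w x : Fin n → ZMod 2) :
    vecMulVec u w *ᵥ x = (w ⬝ᵥ x) • u := by
  funext i
  simp only [vecMulVec, mulVec, dotProduct, Pi.smul_apply, smul_eq_mul, Finset.sum_mul,
    Finset.mul_sum, of_apply]
  exact Finset.sum_congr rfl fun j _ => by ring

def elemMat (u w : Fin n → ZMod 2) : Matrix (Fin n) (Fin n) (ZMod 2) :=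
  1 + vecMulVec u w

lemma elemMat_mulVec (u w x : Fin n → ZMod 2) :
    elemMat u w *ᵥ x = x + (w ⬝ᵥ x) • u := by
  rw [elemMat, add_mulVec, one_mulVec, vecMulVec_mulVec]

lemma elemMat_transpose (u w : Fin n → ZMod 2) : (elemMat u w)ᵀ = elemMat w u := by
  ext i k
  simp only [elemMat, Matrix.transpose_apply, Matrix.add_apply, vecMulVec_apply,
    Matrix.one_apply]
  rw [mul_comm]
  congr 1
  by_cases h : i = k <;> simp [h, eq_comm]

lemma smul_add_self (c : ZMod 2) (u : Fin n → ZMod 2) : c • u + c • u = 0 := by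
  rw [← add_smul, z2_add_self, zero_smul]

lemma smul_add_selfV (c : ZMod 2) (u : V n) : c • u + c • u = 0 := by
  rw [← add_smul, z2_add_self, zero_smul]

lemma elemMat_sq (u w : Fin n → ZMod 2) (h : w ⬝ᵥ u = 0) :
    elemMat u w * elemMat u w = 1 := by
  have key : ∀ x, (elemMat u w * elemMat u w) *ᵥ x = (1 : Matrix (Fin n) (Fin n) (ZMod 2)) *ᵥ x := by
    intro x
    rw [← mulVec_mulVec, elemMat_mulVec, elemMat_mulVec, one_mulVec,
      dotProduct_add, dotProduct_smul, h, smul_eq_mul, mul_zero, add_zero, add_assoc,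
      smul_add_self, add_zero]
  ext i k
  have := congrFun (key (fun j => if j = k then 1 else 0)) i
  simpa [mulVec, dotProduct] using this

/-! ### Transvections -/

def tauL (v : V n) : V n →ₗ[ZMod 2] V n where
  toFun x := x + B x v • v
  map_add' x y := by
    rw [B_add_left, add_smul]
    abel
  map_smul' c x := by
    simp only [RingHom.id_apply, smul_add, smul_smul]
    rw [B_smul_left]

lemma tauL_invol (v : V n) (x : V n) : tauL v (tauL v x) = x := by
  simp only [tauL, LinearMap.coe_mk, AddHom.coe_mk]
  rw [B_add_left, B_smul_left, B_self, mul_zero, add_zero, add_assoc, smul_add_selfV, add_zero]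

def tau (v : V n) : V n ≃ₗ[ZMod 2] V n := mk (tauL v) (tauL_invol v)

lemma tau_apply (v x : V n) : tau v x = x + B x v • v := rfl

lemma tau_fix (v x : V n) (h : B x v = 0) : tau v x = x := by
  rw [tau_apply, h, zero_smul, add_zero]

lemma tau_pres (v : V n) (hv : Q v = 1) (x : V n) : Q (tau v x) = Q x := by
  rw [tau_apply, Q_add, Q_smul, hv, mul_one, B_smul_right, z2_sq,
    show Q x + B x v + B x v = Q x + (B x v + B x v) by ring, z2_add_self, add_zero]


/-! ### Matrix-type generators -/

def matGenL (A : Matrix (Fin n) (Fin n) (ZMod 2)) : V n →ₗ[ZMod 2] V n :=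
  (Matrix.mulVecLin Aᵀ).prodMap (Matrix.mulVecLin A)

lemma matGenL_apply (A : Matrix (Fin n) (Fin n) (ZMod 2)) (x : V n) :
    matGenL A x = (Aᵀ *ᵥ x.1, A *ᵥ x.2) := rfl

def matGen (A : Matrix (Fin n) (Fin n) (ZMod 2)) (hA : A * A = 1) : V n ≃ₗ[ZMod 2] V n :=
  mk (matGenL A) (by
    intro x
    simp only [matGenL_apply, mulVec_mulVec]
    rw [← transpose_mul, hA, transpose_one, one_mulVec, one_mulVec])

lemma matGen_apply (A : Matrix (Fin n) (Fin n) (ZMod 2)) (hA) (x : V n) :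
    matGen A hA x = (Aᵀ *ᵥ x.1, A *ᵥ x.2) := rfl

def gammaGenL (Γ : Matrix (Fin n) (Fin n) (ZMod 2)) : V n →ₗ[ZMod 2] V n where
  toFun x := (x.1 + Γ *ᵥ x.2, x.2)
  map_add' x y := by
    simp only [Prod.fst_add, Prod.snd_add, mulVec_add, Prod.mk_add_mk]
    congr 1
    abel
  map_smul' c x := by
    simp only [Prod.smul_fst, Prod.smul_snd, mulVec_smul, RingHom.id_apply, Prod.smul_mk,
      smul_add]

def gammaGen (Γ : Matrix (Fin n) (Fin n) (ZMod 2)) : V n ≃ₗ[ZMod 2] V n :=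
  mk (gammaGenL Γ) (by
    intro x
    simp only [gammaGenL, LinearMap.coe_mk, AddHom.coe_mk]
    have h0 : Γ *ᵥ x.2 + Γ *ᵥ x.2 = 0 := by
      have := smul_add_self (1 : ZMod 2) (Γ *ᵥ x.2); simpa using this
    rw [add_assoc, h0, add_zero])

lemma gammaGen_apply (Γ : Matrix (Fin n) (Fin n) (ZMod 2)) (x : V n) :
    gammaGen Γ x = (x.1 + Γ *ᵥ x.2, x.2) := rfl

/-! ### The generator set -/

def GS (n : ℕ) : Set (V n ≃ₗ[ZMod 2] V n) :=
  {S : V n ≃ₗ[ZMod 2] V n |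
    (∃ Γ : Matrix (Fin n) (Fin n) (ZMod 2), Γ.IsSymm ∧ (∀ i, Γ i i = 0) ∧
      ∀ v : V n, S v = (v.1 + Γ.mulVec v.2, v.2)) ∨
    (∃ A : Matrix (Fin n) (Fin n) (ZMod 2), IsUnit A ∧
      ∀ v : V n, S v = (Matrix.mulVec (Aᵀ)⁻¹ v.1, Matrix.mulVec A v.2)) ∨
    (∃ s : Finset (Fin n),
      ∀ v : V n, S v = (fun i => if i ∈ s then v.2 i else v.1 i,
                        fun i => if i ∈ s then v.1 i else v.2 i))}

def G (n : ℕ) : Subgroup (V n ≃ₗ[ZMod 2] V n) := Subgroup.closure (GS n)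

lemma matGen_mem (A : Matrix (Fin n) (Fin n) (ZMod 2)) (hA : A * A = 1) :
    matGen A hA ∈ GS n := by
  right; left
  refine ⟨A, ⟨⟨A, A, hA, hA⟩, rfl⟩, fun v => ?_⟩
  have hAt : Aᵀ * Aᵀ = 1 := by rw [← transpose_mul, hA, transpose_one]
  rw [matGen_apply, Matrix.inv_eq_right_inv hAt]

lemma gammaGen_mem (Γ : Matrix (Fin n) (Fin n) (ZMod 2)) (hs : Γ.IsSymm) (hd : ∀ i, Γ i i = 0) :
    gammaGen Γ ∈ GS n := by
  left
  exact ⟨Γ, hs, hd, fun v => rfl⟩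

lemma tau_del_mem (j : Fin n) : tau ((del j, del j) : V n) ∈ GS n := by
  right; right
  refine ⟨{j}, fun v => ?_⟩
  have hB : B v (del j, del j) = v.1 j + v.2 j := by
    simp [B, del, Finset.sum_add_distrib]
  rw [tau_apply, hB]
  ext i <;> simp only [Prod.fst_add, Prod.snd_add, Pi.add_apply, Prod.smul_fst, Prod.smul_snd,
    Pi.smul_apply, smul_eq_mul, Finset.mem_singleton, del]
  · by_cases h : i = j
    · subst h; simp only [if_true, mul_one, eq_self_iff_true]
      exact z2_aab _ _
    · simp [h]
  · by_cases h : i = j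
    · subst h; simp only [if_true, mul_one, eq_self_iff_true]
      exact z2_bab _ _
    · simp [h]


/-! ### The preservation subgroup -/

def Pres (n : ℕ) : Subgroup (V n ≃ₗ[ZMod 2] V n) where
  carrier := {T | ∀ v, Q (T v) = Q v}
  one_mem' := fun _ => rfl
  mul_mem' := by
    intro a b ha hb v
    have h : (a * b) v = a (b v) := rfl
    rw [h, ha, hb]
  inv_mem' := by
    intro a ha v
    have h : (a⁻¹ : V n ≃ₗ[ZMod 2] V n) v = a.symm v := rfl
    calc Q (a⁻¹ v) = Q (a (a⁻¹ v)) := (ha _).symm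
    _ = Q v := by rw [h, a.apply_symm_apply]

lemma z2_rearr : ∀ a b c d : ZMod 2, a = b + c + d → d = a + b + c := by decide

lemma B_of_Q (T : V n ≃ₗ[ZMod 2] V n) (hT : ∀ v, Q (T v) = Q v) (u v : V n) :
    B (T u) (T v) = B u v := by
  have h1 : B (T u) (T v) = Q (T (u + v)) + Q (T u) + Q (T v) := by
    rw [map_add]
    exact z2_rearr _ _ _ _ (Q_add (T u) (T v))
  have h2 : B u v = Q (u + v) + Q u + Q v := z2_rearr _ _ _ _ (Q_add u v)
  rw [h1, h2, hT, hT, hT]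

lemma sym_quad_zero (Γ : Matrix (Fin n) (Fin n) (ZMod 2)) (hs : Γ.IsSymm)
    (hd : ∀ i, Γ i i = 0) (x : Fin n → ZMod 2) :
    ∑ i, (Γ *ᵥ x) i * x i = 0 := by
  have step : ∑ i, (Γ *ᵥ x) i * x i
      = ∑ p ∈ Finset.univ ×ˢ Finset.univ, Γ p.1 p.2 * x p.2 * x p.1 := by
    rw [Finset.sum_product]
    exact Finset.sum_congr rfl fun i _ => by
      simp only [mulVec, dotProduct, Finset.sum_mul]
  rw [step]
  apply Finset.sum_involution (fun p _ => (p.2, p.1))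
  · intro p _
    have hsym : Γ p.2 p.1 = Γ p.1 p.2 := hs.apply p.1 p.2
    simp only [hsym]
    rw [show Γ p.1 p.2 * x p.2 * x p.1 + Γ p.1 p.2 * x p.1 * x p.2
      = Γ p.1 p.2 * x p.2 * x p.1 + Γ p.1 p.2 * x p.2 * x p.1 by ring]
    exact z2_add_self _
  · intro p _ hf hcon
    apply hf
    have : p.2 = p.1 := congrArg Prod.fst hcon
    rw [this, hd, zero_mul, zero_mul]
  · intro p _; exact Finset.mem_product.2 ⟨Finset.mem_univ _, Finset.mem_univ _⟩
  · intro p _; rfl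

lemma GS_sub_Pres : GS n ⊆ (Pres n : Set (V n ≃ₗ[ZMod 2] V n)) := by
  rintro S (⟨Γ, hs, hd, hS⟩ | ⟨A, hA, hS⟩ | ⟨s, hS⟩) <;> intro v
  · rw [hS]
    simp only [Q]
    rw [show ∑ i, ((v.1 + Γ *ᵥ v.2) i * v.2 i) = ∑ i, (v.1 i * v.2 i + (Γ *ᵥ v.2) i * v.2 i) by
      exact Finset.sum_congr rfl fun i _ => by simp [Pi.add_apply]; ring]
    rw [Finset.sum_add_distrib, sym_quad_zero Γ hs hd, add_zero]
  · rw [hS]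
    have hQ : ∀ u w : Fin n → ZMod 2, Q ((u, w) : V n) = u ⬝ᵥ w := fun _ _ => rfl
    rw [hQ]
    have hdet : IsUnit Aᵀ.det := by
      rw [Matrix.det_transpose]
      exact A.isUnit_iff_isUnit_det.1 hA
    calc (Aᵀ)⁻¹ *ᵥ v.1 ⬝ᵥ (A *ᵥ v.2)
        = ((Aᵀ)⁻¹ *ᵥ v.1) ᵥ* A ⬝ᵥ v.2 := dotProduct_mulVec _ _ _
      _ = (Aᵀ *ᵥ ((Aᵀ)⁻¹ *ᵥ v.1)) ⬝ᵥ v.2 := by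
          congr 1
          rw [← transpose_transpose A, vecMul_transpose, transpose_transpose]
      _ = v.1 ⬝ᵥ v.2 := by rw [mulVec_mulVec, Matrix.mul_nonsing_inv _ hdet, one_mulVec]
      _ = Q v := rfl
  · rw [hS]
    simp only [Q]
    exact Finset.sum_congr rfl fun i _ => by by_cases h : i ∈ s <;> simp [h, mul_comm]

lemma G_pres (T : V n ≃ₗ[ZMod 2] V n) (hT : T ∈ G n) : ∀ v, Q (T v) = Q v :=
  (Subgroup.closure_le (Pres n)).2 GS_sub_Pres hT

lemma G_presB (T : V n ≃ₗ[ZMod 2] V n) (hT : T ∈ G n) (u v : V n) :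
    B (T u) (T v) = B u v := B_of_Q T (G_pres T hT) u v

/-! ### Conjugation of transvections -/

lemma tau_conj (g : V n ≃ₗ[ZMod 2] V n) (hg : ∀ u w, B (g u) (g w) = B u w) (v x : V n) :
    tau (g v) (g x) = g (tau v x) := by
  rw [tau_apply, tau_apply, map_add, _root_.map_smul, hg]

lemma tau_mem_of (g : V n ≃ₗ[ZMod 2] V n) (v : V n) (hgG : g ∈ G n)
    (h : tau (g v) ∈ G n) : tau v ∈ G n := by
  have hg := G_presB g hgG
  have : tau v = g⁻¹ * (tau (g v) * g) := by
    apply LinearEquiv.ext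
    intro x
    have happ : (g⁻¹ * (tau (g v) * g)) x = g.symm (tau (g v) (g x)) := rfl
    rw [happ, tau_conj g hg, g.symm_apply_apply]
  rw [this]
  exact mul_mem (inv_mem hgG) (mul_mem h hgG)

lemma vadd_aab (x y : Fin n → ZMod 2) : x + (x + y) = y := funext fun i => z2_aab _ _

lemma tau_mem (v : V n) (hv : Q v = 1) : tau v ∈ G n := by
  have hne : ∃ j : Fin n, v.1 j * v.2 j ≠ 0 := by
    by_contra hcon
    push_neg at hcon
    have : Q v = 0 := Finset.sum_eq_zero fun i _ => hcon i
    rw [hv] at this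
    exact one_ne_zero this
  obtain ⟨j, hj⟩ := hne
  have hv1 : v.1 j = 1 := by
    rcases z2_cases (v.1 j) with h | h
    · rw [h, zero_mul] at hj; exact absurd rfl hj
    · exact h
  have hv2 : v.2 j = 1 := by
    rcases z2_cases (v.2 j) with h | h
    · rw [h, mul_zero] at hj; exact absurd rfl hj
    · exact h
  have hQC : v.2 ⬝ᵥ v.1 = 1 := by
    rw [show v.2 ⬝ᵥ v.1 = Q v from Finset.sum_congr rfl fun i _ => mul_comm _ _]
    exact hv
  -- first matrix
  have hL : elemMat (v.2 + del j) (del j) * elemMat (v.2 + del j) (del j) = 1 := by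
    apply elemMat_sq
    rw [del_dot, Pi.add_apply, hv2]
    simp [del, z2_add_self]
  set L := elemMat (v.2 + del j) (del j) with hLdef
  set a' : Fin n → ZMod 2 := Lᵀ *ᵥ v.1 with ha'def
  have ha'j : a' j = 1 := by
    rw [ha'def, hLdef, elemMat_transpose, elemMat_mulVec]
    simp only [Pi.add_apply, Pi.smul_apply, smul_eq_mul]
    rw [add_dotProduct, hQC, del_dot, hv1]
    simp only [del, if_pos rfl]
    decide
  have hA2 : elemMat (del j) (a' + del j) * elemMat (del j) (a' + del j) = 1 := by
    apply elemMat_sq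
    rw [dot_del, Pi.add_apply, ha'j]
    simp [del, z2_add_self]
  set g : V n ≃ₗ[ZMod 2] V n := matGen _ hA2 * matGen _ hL with hgdef
  have hgG : g ∈ G n :=
    mul_mem (Subgroup.subset_closure (matGen_mem _ hA2)) (Subgroup.subset_closure (matGen_mem _ hL))
  have hgv : g v = ((del j, del j) : V n) := by
    have h1 : matGen _ hL v = ((a', del j) : V n) := by
      rw [matGen_apply]
      refine Prod.ext rfl ?_
      simp only
      rw [hLdef, elemMat_mulVec, del_dot, hv2, one_smul, ← add_assoc]
      funext i
      simp only [Pi.add_apply]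
      rw [z2_add_self, zero_add]
    have h2 : matGen _ hA2 ((a', del j) : V n) = ((del j, del j) : V n) := by
      rw [matGen_apply]
      refine Prod.ext ?_ ?_
      · simp only
        rw [elemMat_transpose, elemMat_mulVec, del_dot, ha'j, one_smul, vadd_aab]
      · simp only
        rw [elemMat_mulVec, dot_del, Pi.add_apply, ha'j]
        simp [del, z2_add_self]
    have : g v = matGen _ hA2 (matGen _ hL v) := rfl
    rw [this, h1, h2]
  apply tau_mem_of g v hgG
  rw [hgv]
  exact Subgroup.subset_closure (tau_del_mem j)


/-! ### Basis decomposition -/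

lemma add_self_V (x : V n) : x + x = 0 := by
  have := smul_add_selfV (1 : ZMod 2) x; simpa using this

lemma aabV (x y : V n) : x + (x + y) = y := by
  rw [← add_assoc, add_self_V, zero_add]

lemma B_e_right (v : V n) (i : Fin n) : B v (ee i) = v.2 i := by
  rw [B_comm, B_e_left]

lemma B_f_right (v : V n) (i : Fin n) : B v (ff i) = v.1 i := by
  rw [B_comm, B_f_left]

lemma decomp (v : V n) : v = (∑ i, v.1 i • ee i) + (∑ i, v.2 i • ff i) := by
  refine Prod.ext ?_ ?_
  · simp only [Prod.fst_add, Prod.fst_sum, Prod.smul_fst, ee, ff, smul_zero,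
      Finset.sum_const_zero, add_zero]
    funext k
    simp only [Finset.sum_apply, Pi.smul_apply, del, smul_eq_mul, mul_ite, mul_one, mul_zero]
    rw [Finset.sum_ite_eq Finset.univ k v.1]
    simp
  · simp only [Prod.snd_add, Prod.snd_sum, Prod.smul_snd, ee, ff, smul_zero,
      Finset.sum_const_zero, zero_add]
    funext k
    simp only [Finset.sum_apply, Pi.smul_apply, del, smul_eq_mul, mul_ite, mul_one, mul_zero]
    rw [Finset.sum_ite_eq Finset.univ k v.2]
    simp

lemma fix_all (T : V n ≃ₗ[ZMod 2] V n) (h : ∀ i, T (ee i) = ee i ∧ T (ff i) = ff i) :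
    T = 1 := by
  apply LinearEquiv.ext
  intro v
  have h1 : T v = T ((∑ i, v.1 i • ee i) + (∑ i, v.2 i • ff i)) := by rw [← decomp]
  rw [h1, map_add, map_sum, map_sum]
  have e1 : ∑ i, T (v.1 i • ee i) = ∑ i, v.1 i • ee i :=
    Finset.sum_congr rfl fun i _ => by rw [_root_.map_smul, (h i).1]
  have e2 : ∑ i, T (v.2 i • ff i) = ∑ i, v.2 i • ff i :=
    Finset.sum_congr rfl fun i _ => by rw [_root_.map_smul, (h i).2]
  rw [e1, e2, ← decomp]
  rfl

lemma tau_fixes (x : V n) (i : Fin n) (h1 : x.1 i = 0) (h2 : x.2 i = 0) :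
    tau x (ee i) = ee i ∧ tau x (ff i) = ff i :=
  ⟨tau_fix x (ee i) (by rw [B_e_left, h2]), tau_fix x (ff i) (by rw [B_f_left, h1])⟩

lemma vmvT (u w : Fin n → ZMod 2) : (vecMulVec u w)ᵀ = vecMulVec w u := by
  ext i k
  simp only [Matrix.transpose_apply, vecMulVec_apply]
  ring

/-! ### Step A -/

lemma stepA {k : ℕ} (hk : k < n) (u : V n) (hQu : Q u = 0) (hu0 : u ≠ 0)
    (hW : ∀ i : Fin n, (i : ℕ) < k → u.1 i = 0 ∧ u.2 i = 0) :
    ∃ g : V n ≃ₗ[ZMod 2] V n, g ∈ G n ∧ g u = ee ⟨k, hk⟩ ∧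
      (∀ i : Fin n, (i : ℕ) < k → g (ee i) = ee i ∧ g (ff i) = ff i) := by
  set κ : Fin n := ⟨k, hk⟩ with hκ
  have hκi : ∀ i : Fin n, (i : ℕ) < k → i ≠ κ := by
    intro i hi hcon
    rw [hcon] at hi
    simp [hκ] at hi
  have hdelκ : ∀ i : Fin n, (i : ℕ) < k → del κ i = 0 := by
    intro i hi
    simp [del, hκi i hi]
  by_cases hue : u = ee κ
  · exact ⟨1, one_mem _, by rw [show (1 : V n ≃ₗ[ZMod 2] V n) u = u from rfl, hue],
      fun i _ => ⟨rfl, rfl⟩⟩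
  by_cases hbe : u.2 κ = 1
  · -- single transvection
    set x := u + ee κ with hx
    have hQx : Q x = 1 := by
      rw [hx, Q_add, hQu, Q_e, B_e_right, hbe]
      decide
    have hgu : tau x u = ee κ := by
      rw [tau_apply, hx, B_add_right, B_self, B_e_right, hbe, zero_add, one_smul, aabV]
    refine ⟨tau x, tau_mem x hQx, hgu, fun i hi => tau_fixes x i ?_ ?_⟩
    · rw [hx]
      simp only [Prod.fst_add, Pi.add_apply, ee]
      rw [(hW i hi).1, hdelκ i hi, add_zero]
    · rw [hx]
      simp only [Prod.snd_add, Pi.add_apply, ee, Pi.zero_apply]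
      rw [(hW i hi).2, add_zero]
  · -- two transvections
    have hbe0 : u.2 κ = 0 := z2_ne_one _ hbe
    -- construct a
    have ha : ∃ a : V n, B u a = 1 ∧ a.2 κ = 1 ∧
        (∀ i : Fin n, (i : ℕ) < k → a.1 i = 0 ∧ a.2 i = 0) := by
      by_cases hf : u.1 κ = 1
      · refine ⟨ff κ, by rw [B_f_right, hf], by simp [ff, del], fun i hi => ?_⟩
        constructor
        · rfl
        · simp only [ff]
          exact hdelκ i hi
      · have hf0 : u.1 κ = 0 := z2_ne_one _ hf
        have hj : ∃ j : Fin n, u.1 j = 1 ∨ u.2 j = 1 := by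
          by_contra hcon
          push_neg at hcon
          apply hu0
          refine Prod.ext (funext fun j => ?_) (funext fun j => ?_)
          · exact z2_ne_one _ fun h => (hcon j).1 h
          · exact z2_ne_one _ fun h => (hcon j).2 h
        obtain ⟨j, hj⟩ := hj
        have hjk : ¬ ((j : ℕ) < k) := by
          intro hlt
          rcases hW j hlt with ⟨h1, h2⟩
          rcases hj with h | h <;> simp_all
        rcases hj with hj1 | hj2
        · have hjκ : j ≠ κ := by
            intro hcon; rw [hcon, hf0] at hj1; exact one_ne_zero hj1.symm
          refine ⟨ff κ + ff j, ?_, ?_, fun i hi => ?_⟩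
          · rw [B_add_right, B_f_right, B_f_right, hf0, hj1, zero_add]
          · simp only [Prod.snd_add, Pi.add_apply, ff]
            simp [del, hjκ.symm]  -- del κ κ + del j κ
          · constructor
            · rfl
            · simp only [Prod.snd_add, Pi.add_apply, ff]
              rw [hdelκ i hi]
              have : del j i = 0 := by
                simp only [del, if_neg (show i ≠ j by rintro rfl; exact hjk hi)]
              rw [this, add_zero]
        · refine ⟨ff κ + ee j, ?_, ?_, fun i hi => ?_⟩
          · rw [B_add_right, B_f_right, B_e_right, hf0, hj2, zero_add]
          · simp only [Prod.snd_add, Pi.add_apply, ff, ee, Pi.zero_apply]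
            simp [del]
          · constructor
            · simp only [Prod.fst_add, Pi.add_apply, ff, ee, Pi.zero_apply]
              have : del j i = 0 := by
                simp only [del, if_neg (show i ≠ j by rintro rfl; exact hjk hi)]
              rw [this, zero_add]
            · simp only [Prod.snd_add, Pi.add_apply, ff, ee, Pi.zero_apply]
              rw [hdelκ i hi, add_zero]
    obtain ⟨a, hBua, ha2κ, haW⟩ := ha
    set u'' : V n := a + Q a • u with hu''
    have hQu'' : Q u'' = 0 := by
      rw [hu'', Q_add, Q_smul, hQu, mul_zero, add_zero, B_smul_right, B_comm a u, hBua, mul_one,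
        z2_add_self]
    have hBuu'' : B u u'' = 1 := by
      rw [hu'', B_add_right, hBua, B_smul_right, B_self, mul_zero, add_zero]
    have hu''2κ : u''.2 κ = 1 := by
      rw [hu'']
      simp only [Prod.snd_add, Prod.smul_snd, Pi.add_apply, Pi.smul_apply, smul_eq_mul]
      rw [ha2κ, hbe0, mul_zero, add_zero]
    have hu''W : ∀ i : Fin n, (i : ℕ) < k → u''.1 i = 0 ∧ u''.2 i = 0 := by
      intro i hi
      rw [hu'']
      constructor
      · simp only [Prod.fst_add, Prod.smul_fst, Pi.add_apply, Pi.smul_apply, smul_eq_mul]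
        rw [(haW i hi).1, (hW i hi).1, mul_zero, add_zero]
      · simp only [Prod.snd_add, Prod.smul_snd, Pi.add_apply, Pi.smul_apply, smul_eq_mul]
        rw [(haW i hi).2, (hW i hi).2, mul_zero, add_zero]
    set v1 : V n := u + u'' with hv1
    set v2 : V n := u'' + ee κ with hv2
    have hQv1 : Q v1 = 1 := by rw [hv1, Q_add, hQu, hQu'', hBuu'']; decide
    have hQv2 : Q v2 = 1 := by
      rw [hv2, Q_add, hQu'', Q_e, B_e_right, hu''2κ]; decide
    have hstep1 : tau v1 u = u'' := by
      rw [tau_apply, hv1, B_add_right, B_self, zero_add, hBuu'', one_smul, aabV]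
    have hstep2 : tau v2 u'' = ee κ := by
      rw [tau_apply, hv2, B_add_right, B_self, zero_add, B_e_right, hu''2κ, one_smul, aabV]
    refine ⟨tau v2 * tau v1, mul_mem (tau_mem v2 hQv2) (tau_mem v1 hQv1), ?_, fun i hi => ?_⟩
    · have : (tau v2 * tau v1) u = tau v2 (tau v1 u) := rfl
      rw [this, hstep1, hstep2]
    · have hfix1 := tau_fixes v1 i (by
        rw [hv1]; simp only [Prod.fst_add, Pi.add_apply]
        rw [(hW i hi).1, (hu''W i hi).1, add_zero]) (by
        rw [hv1]; simp only [Prod.snd_add, Pi.add_apply]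
        rw [(hW i hi).2, (hu''W i hi).2, add_zero])
      have hfix2 := tau_fixes v2 i (by
        rw [hv2]; simp only [Prod.fst_add, Pi.add_apply, ee]
        rw [(hu''W i hi).1, hdelκ i hi, add_zero]) (by
        rw [hv2]; simp only [Prod.snd_add, Pi.add_apply, ee, Pi.zero_apply]
        rw [(hu''W i hi).2, add_zero])
      constructor
      · have : (tau v2 * tau v1) (ee i) = tau v2 (tau v1 (ee i)) := rfl
        rw [this, hfix1.1, hfix2.1]
      · have : (tau v2 * tau v1) (ff i) = tau v2 (tau v1 (ff i)) := rfl
        rw [this, hfix1.2, hfix2.2]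


/-! ### Step B -/

lemma stepB {k : ℕ} (hk : k < n) (w' : V n) (hQ : Q w' = 0) (h2κ : w'.2 ⟨k, hk⟩ = 1)
    (hW : ∀ i : Fin n, (i : ℕ) < k → w'.1 i = 0 ∧ w'.2 i = 0) :
    ∃ g : V n ≃ₗ[ZMod 2] V n, g ∈ G n ∧ g w' = ff ⟨k, hk⟩ ∧ g (ee ⟨k, hk⟩) = ee ⟨k, hk⟩ ∧
      (∀ i : Fin n, (i : ℕ) < k → g (ee i) = ee i ∧ g (ff i) = ff i) := by
  set κ : Fin n := ⟨k, hk⟩ with hκ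
  have hκi : ∀ i : Fin n, (i : ℕ) < k → i ≠ κ := by
    intro i hi hcon
    rw [hcon] at hi
    simp [hκ] at hi
  have hdelκ : ∀ i : Fin n, (i : ℕ) < k → del κ i = 0 := by
    intro i hi
    simp [del, hκi i hi]
  by_cases hwf : w' = ff κ
  · exact ⟨1, one_mem _, by rw [show (1 : V n ≃ₗ[ZMod 2] V n) w' = w' from rfl, hwf], rfl,
      fun i _ => ⟨rfl, rfl⟩⟩
  by_cases h1κ : w'.1 κ = 1
  · -- single transvection
    set x := w' + ff κ with hx
    have hQx : Q x = 1 := by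
      rw [hx, Q_add, hQ, Q_f, B_f_right, h1κ]; decide
    have hgw : tau x w' = ff κ := by
      rw [tau_apply, hx, B_add_right, B_self, B_f_right, h1κ, zero_add, one_smul, aabV]
    have hgee : tau x (ee κ) = ee κ := by
      apply tau_fix
      rw [B_e_left, hx]
      simp only [Prod.snd_add, Pi.add_apply, ff]
      rw [h2κ]
      simp [del, z2_add_self]
    refine ⟨tau x, tau_mem x hQx, hgw, hgee, fun i hi => tau_fixes x i ?_ ?_⟩
    · rw [hx]
      simp only [Prod.fst_add, Pi.add_apply, ff, Pi.zero_apply]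
      rw [(hW i hi).1, add_zero]
    · rw [hx]
      simp only [Prod.snd_add, Pi.add_apply, ff]
      rw [(hW i hi).2, hdelκ i hi, add_zero]
  · -- Eichler element
    have h1κ0 : w'.1 κ = 0 := z2_ne_one _ h1κ
    set c : V n := w' + ff κ with hc
    have hc1 : c.1 = w'.1 := by
      rw [hc]
      simp only [Prod.fst_add, ff, Pi.zero_apply]
      funext i
      simp
    have hc1κ : c.1 κ = 0 := by rw [hc1]; exact h1κ0
    have hc2κ : c.2 κ = 0 := by
      rw [hc]
      simp only [Prod.snd_add, Pi.add_apply, ff]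
      rw [h2κ]
      simp [del, z2_add_self]
    have hQc : Q c = 0 := by
      rw [hc, Q_add, hQ, Q_f, B_f_right, h1κ0]; decide
    have hcW : ∀ i : Fin n, (i : ℕ) < k → c.1 i = 0 ∧ c.2 i = 0 := by
      intro i hi
      constructor
      · rw [hc1]; exact (hW i hi).1
      · rw [hc]
        simp only [Prod.snd_add, Pi.add_apply, ff]
        rw [(hW i hi).2, hdelκ i hi, add_zero]
    have hc21 : c.2 ⬝ᵥ c.1 = 0 := by
      rw [show c.2 ⬝ᵥ c.1 = Q c from Finset.sum_congr rfl fun i _ => mul_comm _ _]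
      exact hQc
    have hc12 : c.1 ⬝ᵥ c.2 = 0 := hQc
    -- the matrices
    have hA : elemMat c.2 (del κ) * elemMat c.2 (del κ) = 1 := by
      apply elemMat_sq
      rw [del_dot, hc2κ]
    set Γ : Matrix (Fin n) (Fin n) (ZMod 2) := vecMulVec c.1 (del κ) + vecMulVec (del κ) c.1
      with hΓ
    have hΓs : Γ.IsSymm := by
      rw [Matrix.IsSymm, hΓ, transpose_add, vmvT, vmvT, add_comm]
    have hΓd : ∀ i, Γ i i = 0 := by
      intro i
      rw [hΓ]
      simp only [Matrix.add_apply, vecMulVec_apply]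
      rw [mul_comm, z2_add_self]
    have hΓκ : Γ *ᵥ del κ = c.1 := by
      rw [hΓ, add_mulVec, vecMulVec_mulVec, vecMulVec_mulVec, del_dot, dot_del, hc1κ, zero_smul,
        add_zero]
      have : del κ κ = 1 := by simp [del]
      rw [this, one_smul]
    have hΓ0 : ∀ i : Fin n, (i : ℕ) < k → Γ *ᵥ del i = 0 := by
      intro i hi
      rw [hΓ, add_mulVec, vecMulVec_mulVec, vecMulVec_mulVec, del_dot, dot_del, (hcW i hi).1,
        zero_smul, add_zero]
      have : del i κ = 0 := by
        simp only [del, if_neg (fun hcon : κ = i => hκi i hi hcon.symm)]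
      rw [this, zero_smul]
    set g2 : V n ≃ₗ[ZMod 2] V n := matGen _ hA with hg2
    set g1 : V n ≃ₗ[ZMod 2] V n := gammaGen Γ with hg1
    have hg2w : g2 w' = ((c.1, del κ) : V n) := by
      rw [hg2, matGen_apply, elemMat_transpose]
      refine Prod.ext ?_ ?_
      · simp only
        rw [elemMat_mulVec, ← hc1, hc21, zero_smul, add_zero, hc1]
      · simp only
        rw [elemMat_mulVec, del_dot, h2κ, one_smul]
        have hcsnd : c.2 = w'.2 + del κ := by
          rw [hc]
          simp only [Prod.snd_add, ff]
        rw [hcsnd, vadd_aab]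
    have hg1cw : g1 ((c.1, del κ) : V n) = ff κ := by
      rw [hg1, gammaGen_apply]
      simp only
      rw [hΓκ]
      refine Prod.ext ?_ rfl
      simp only
      funext i
      simp only [Pi.add_apply, ff, Pi.zero_apply]
      exact z2_add_self _
    have hg2e : ∀ i : Fin n, (i : ℕ) < k ∨ i = κ → g2 (ee i) = ee i := by
      intro i hi
      rw [hg2, matGen_apply, elemMat_transpose]
      refine Prod.ext ?_ ?_
      · simp only [ee]
        rw [elemMat_mulVec, dot_del]
        rcases hi with hi | hi
        · rw [(hcW i hi).2, zero_smul, add_zero]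
        · rw [hi, hc2κ, zero_smul, add_zero]
      · simp only [ee]
        rw [mulVec_zero]
    have hg2f : ∀ i : Fin n, (i : ℕ) < k → g2 (ff i) = ff i := by
      intro i hi
      rw [hg2, matGen_apply, elemMat_transpose]
      refine Prod.ext ?_ ?_
      · simp only [ff]
        rw [mulVec_zero]
      · simp only [ff]
        rw [elemMat_mulVec, del_dot]
        have : del i κ = 0 := by
          simp only [del, if_neg (fun hcon : κ = i => hκi i hi hcon.symm)]
        rw [this, zero_smul, add_zero]
    have hg1e : ∀ i : Fin n, g1 (ee i) = ee i := by
      intro i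
      rw [hg1, gammaGen_apply]
      simp only [ee]
      rw [mulVec_zero, add_zero]
    have hg1f : ∀ i : Fin n, (i : ℕ) < k → g1 (ff i) = ff i := by
      intro i hi
      rw [hg1, gammaGen_apply]
      simp only [ff]
      rw [hΓ0 i hi, add_zero]
    refine ⟨g1 * g2, mul_mem (Subgroup.subset_closure (gammaGen_mem Γ hΓs hΓd))
      (Subgroup.subset_closure (matGen_mem _ hA)), ?_, ?_, fun i hi => ⟨?_, ?_⟩⟩
    · have : (g1 * g2) w' = g1 (g2 w') := rfl
      rw [this, hg2w, hg1cw]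
    · have : (g1 * g2) (ee κ) = g1 (g2 (ee κ)) := rfl
      rw [this, hg2e κ (Or.inr rfl), hg1e]
    · have : (g1 * g2) (ee i) = g1 (g2 (ee i)) := rfl
      rw [this, hg2e i (Or.inl hi), hg1e]
    · have : (g1 * g2) (ff i) = g1 (g2 (ff i)) := rfl
      rw [this, hg2f i hi, hg1f i hi]


/-! ### Main induction -/

lemma B_ee_ff (i j : Fin n) : B (ee i) (ff j) = (if i = j then 1 else 0 : ZMod 2) := by
  rw [B_e_left]
  simp only [ff, del]

lemma key : ∀ m k : ℕ, k + m = n → ∀ T : V n ≃ₗ[ZMod 2] V n, (∀ v, Q (T v) = Q v) →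
    (∀ i : Fin n, (i : ℕ) < k → T (ee i) = ee i ∧ T (ff i) = ff i) → T ∈ G n := by
  intro m
  induction m with
  | zero =>
    intro k hkn T _ hfix
    have hT1 : T = 1 := fix_all T (fun i => hfix i (by omega))
    rw [hT1]
    exact one_mem _
  | succ m ih =>
    intro k hkn T hT hfix
    have hk : k < n := by omega
    set κ : Fin n := ⟨k, hk⟩ with hκ
    have hTB := B_of_Q T hT
    set u := T (ee κ) with hu
    set w := T (ff κ) with hw
    have hQu : Q u = 0 := by rw [hu, hT, Q_e]
    have hQw : Q w = 0 := by rw [hw, hT, Q_f]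
    have hBuw : B u w = 1 := by
      rw [hu, hw, hTB, B_ee_ff, if_pos rfl]
    have hu0 : u ≠ 0 := by
      intro hcon
      rw [hcon, B_zero_left] at hBuw
      exact zero_ne_one hBuw
    have hκi : ∀ i : Fin n, (i : ℕ) < k → i ≠ κ := by
      intro i hi hcon
      rw [hcon] at hi
      simp [hκ] at hi
    have huW : ∀ i : Fin n, (i : ℕ) < k → u.1 i = 0 ∧ u.2 i = 0 := by
      intro i hi
      constructor
      · have h1 : B (ff i) u = B (T (ff i)) (T (ee κ)) := by rw [(hfix i hi).2, hu]
        rw [hTB] at h1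
        rw [← B_f_left i u, h1, B_comm, B_e_left]
        simp only [ff, del]
        rw [if_neg (fun hcon : κ = i => hκi i hi hcon.symm)]
      · have h1 : B (ee i) u = B (T (ee i)) (T (ee κ)) := by rw [(hfix i hi).1, hu]
        rw [hTB] at h1
        rw [← B_e_left i u, h1, B_e_left]
        rfl
    obtain ⟨gA, hgAG, hgAu, hgAfix⟩ := stepA hk u hQu hu0 huW
    have hgAB := G_presB gA hgAG
    set w' := gA w with hw'
    have hQw' : Q w' = 0 := by rw [hw', G_pres gA hgAG, hQw]
    have hw'2κ : w'.2 κ = 1 := by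
      rw [← B_e_left κ w', ← hgAu, hw', hgAB, hBuw]
    have hWw' : ∀ i : Fin n, (i : ℕ) < k → w'.1 i = 0 ∧ w'.2 i = 0 := by
      intro i hi
      constructor
      · rw [← B_f_left i w', hw', ← (hgAfix i hi).2, hgAB]
        have h1 : B (ff i) w = B (T (ff i)) (T (ff κ)) := by rw [(hfix i hi).2, hw]
        rw [hTB] at h1
        rw [h1, B_f_left]
        rfl
      · rw [← B_e_left i w', hw', ← (hgAfix i hi).1, hgAB]
        have h1 : B (ee i) w = B (T (ee i)) (T (ff κ)) := by rw [(hfix i hi).1, hw]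
        rw [hTB] at h1
        rw [h1, B_ee_ff, if_neg (hκi i hi)]
    obtain ⟨gB, hgBG, hgBw', hgBeκ, hgBfix⟩ := stepB hk w' hQw' hw'2κ hWw'
    set T' := gB * (gA * T) with hT'
    have hT'app : ∀ v, T' v = gB (gA (T v)) := fun _ => rfl
    have hT'pres : ∀ v, Q (T' v) = Q v := by
      intro v
      rw [hT'app, G_pres gB hgBG, G_pres gA hgAG, hT]
    have hT'fix : ∀ i : Fin n, (i : ℕ) < k + 1 → T' (ee i) = ee i ∧ T' (ff i) = ff i := by
      intro i hi
      by_cases hik : (i : ℕ) < k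
      · constructor
        · rw [hT'app, (hfix i hik).1, (hgAfix i hik).1, (hgBfix i hik).1]
        · rw [hT'app, (hfix i hik).2, (hgAfix i hik).2, (hgBfix i hik).2]
      · have hieq : i = κ := by
          apply Fin.ext
          simp only [hκ]
          omega
        subst hieq
        constructor
        · rw [hT'app, ← hu, hgAu, hgBeκ]
        · rw [hT'app, ← hw, ← hw', hgBw']
    have hT'G : T' ∈ G n := ih (k + 1) (by omega) T' hT'pres hT'fix
    have hTeq : T = gA⁻¹ * (gB⁻¹ * T') := by
      rw [hT']
      group
    rw [hTeq]
    exact mul_mem (inv_mem hgAG) (mul_mem (inv_mem hgBG) hT'G)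

end SpinGen


/-- anyon-level content of Lemma 2: the group of `𝔽₂`-linear
automorphisms of `𝔽₂ⁿ ⊕ 𝔽₂ⁿ` preserving the quadratic form `q(z,x) = Σᵢ zᵢxᵢ`
is generated by (i) `(z,x) ↦ (z + Γx, x)` for `Γ` symmetric with zero diagonal,
(ii) `(z,x) ↦ ((Aᵀ)⁻¹z, Ax)` for `A ∈ GL(n,𝔽₂)`, and (iii) the partial swaps
`U_S` exchanging `zᵢ ↔ xᵢ` for `i ∈ S`. -/
theorem spin_preserving_linear_automorphisms_generated (n : ℕ) (hn : 1 ≤ n) :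
    ∀ T : ((Fin n → ZMod 2) × (Fin n → ZMod 2)) ≃ₗ[ZMod 2]
          ((Fin n → ZMod 2) × (Fin n → ZMod 2)),
      ((∀ v : (Fin n → ZMod 2) × (Fin n → ZMod 2),
          ∑ i : Fin n, (T v).1 i * (T v).2 i = ∑ i : Fin n, v.1 i * v.2 i) ↔
        T ∈ Subgroup.closure
          {S : ((Fin n → ZMod 2) × (Fin n → ZMod 2)) ≃ₗ[ZMod 2]
               ((Fin n → ZMod 2) × (Fin n → ZMod 2)) |
            (∃ Γ : Matrix (Fin n) (Fin n) (ZMod 2), Γ.IsSymm ∧ (∀ i, Γ i i = 0) ∧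
              ∀ v : (Fin n → ZMod 2) × (Fin n → ZMod 2),
                S v = (v.1 + Γ.mulVec v.2, v.2)) ∨
            (∃ A : Matrix (Fin n) (Fin n) (ZMod 2), IsUnit A ∧
              ∀ v : (Fin n → ZMod 2) × (Fin n → ZMod 2),
                S v = (Matrix.mulVec (Aᵀ)⁻¹ v.1, Matrix.mulVec A v.2)) ∨
            (∃ s : Finset (Fin n),
              ∀ v : (Fin n → ZMod 2) × (Fin n → ZMod 2),
                S v = (fun i => if i ∈ s then v.2 i else v.1 i,
                       fun i => if i ∈ s then v.1 i else v.2 i))}) := by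
  intro T
  constructor
  · intro hT
    exact SpinGen.key n 0 (by omega) T hT (fun i hi => absurd hi (Nat.not_lt_zero _))
  · intro hmem v
    exact SpinGen.G_pres T hmem v
end

section
/- Define ν₀ : (S₃ × S₃) × (S₃ × S₃) → ℂˣ by ν₀((g₁,g₂),(h₁,h₂)) := -1 if g₁ and h₂ are both odd permutations, and 1 otherwise. Then for every 2-cocycle μ on S₃ × S₃ with values in ℂˣ, either μ is a 2-coboundary or the pointwise product μ·ν₀ is a 2-coboundary. (Together with the fact that ν₀ is itself a 2-cocycle which is not a coboundary, this says H²(S₃ × S₃, U(1)) ≅ ℤ₂.) -/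
/-- The 2-cocycle `ν₀` on `S₃ × S₃`: `-1` if `g₁` and `h₂` are both odd, else `1`. -/
noncomputable def nuZero
    (x y : Equiv.Perm (Fin 3) × Equiv.Perm (Fin 3)) : ℂˣ :=
  if Equiv.Perm.sign x.1 = -1 ∧ Equiv.Perm.sign y.2 = -1 then -1 else 1

namespace S3C

abbrev G3 := Equiv.Perm (Fin 3)
abbrev GG := G3 × G3

def pa : G3 := Equiv.swap 0 1
def pb : G3 := Equiv.swap 0 1 * Equiv.swap 1 2

lemma cls : ∀ x : G3, x = 1 ∨ x = pb ∨ x = pb*pb ∨ x = pa ∨ x = pa*pb ∨ x = pa*(pb*pb) := by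
  decide

def IsC (μ : GG → GG → ℂˣ) : Prop :=
  ∀ x y z, μ x y * μ (x*y) z = μ x (y*z) * μ y z

variable {μ : GG → GG → ℂˣ} {hμ : IsC μ}

lemma mu_one_left (hμ : IsC μ) (g : GG) : μ 1 g = μ 1 1 := by
  have h := hμ 1 1 g
  simp only [one_mul] at h
  exact (mul_right_cancel h).symm

lemma mu_one_right (hμ : IsC μ) (g : GG) : μ g 1 = μ 1 1 := by
  have h := hμ g 1 1
  simp only [mul_one, one_mul] at h
  exact mul_left_cancel h

lemma mu_inv_pair (hμ : IsC μ) (g : GG) : μ g⁻¹ g = μ g g⁻¹ := by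
  have h := hμ g g⁻¹ g
  rw [mul_inv_cancel, inv_mul_cancel, mu_one_left hμ g, mu_one_right hμ g, mul_comm (μ g g⁻¹)] at h
  exact (mul_left_cancel h).symm

@[ext] structure Ext (μ : GG → GG → ℂˣ) (hμ : IsC μ) : Type where
  u : ℂˣ
  g : GG

instance : Group (Ext μ hμ) where
  mul x y := ⟨x.u * y.u * μ x.g y.g, x.g * y.g⟩
  one := ⟨(μ 1 1)⁻¹, 1⟩
  inv x := ⟨(x.u * μ x.g x.g⁻¹ * μ 1 1)⁻¹, x.g⁻¹⟩
  mul_assoc x y z := by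
    refine Ext.ext ?_ (mul_assoc _ _ _)
    show (x.u * y.u * μ x.g y.g) * z.u * μ (x.g*y.g) z.g
       = x.u * (y.u * z.u * μ y.g z.g) * μ x.g (y.g*z.g)
    have h := congrArg Units.val (hμ x.g y.g z.g)
    apply Units.ext
    simp only [Units.val_mul] at h ⊢
    linear_combination (x.u * y.u * z.u : ℂ) * h
  one_mul x := by
    refine Ext.ext ?_ (one_mul _)
    show (μ 1 1)⁻¹ * x.u * μ 1 x.g = x.u
    rw [mu_one_left hμ x.g]
    apply Units.ext
    push_cast
    field_simp
  mul_one x := by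
    refine Ext.ext ?_ (mul_one _)
    show x.u * (μ 1 1)⁻¹ * μ x.g 1 = x.u
    rw [mu_one_right hμ x.g]
    apply Units.ext
    push_cast
    field_simp
  inv_mul_cancel x := by
    refine Ext.ext ?_ (inv_mul_cancel _)
    show (x.u * μ x.g x.g⁻¹ * μ 1 1)⁻¹ * x.u * μ x.g⁻¹ x.g = (μ 1 1)⁻¹
    rw [mu_inv_pair hμ]
    apply Units.ext
    push_cast
    field_simp

lemma mul_def (x y : Ext μ hμ) : x * y = ⟨x.u * y.u * μ x.g y.g, x.g * y.g⟩ := rfl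
lemma one_def : (1 : Ext μ hμ) = ⟨(μ 1 1)⁻¹, 1⟩ := rfl
lemma g_mul (x y : Ext μ hμ) : (x*y).g = x.g * y.g := rfl
lemma g_one : (1 : Ext μ hμ).g = 1 := rfl

/-- central scalars -/
def iota (μ : GG → GG → ℂˣ) (hμ : IsC μ) (t : ℂˣ) : Ext μ hμ := ⟨t * (μ 1 1)⁻¹, 1⟩

lemma iota_mul (t : ℂˣ) (x : Ext μ hμ) : iota μ hμ t * x = ⟨t * x.u, x.g⟩ := by
  rw [mul_def]
  refine Ext.ext ?_ (one_mul _)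
  show t * (μ 1 1)⁻¹ * x.u * μ 1 x.g = t * x.u
  rw [mu_one_left hμ x.g]
  apply Units.ext; push_cast; field_simp

lemma mul_iota (t : ℂˣ) (x : Ext μ hμ) : x * iota μ hμ t = ⟨t * x.u, x.g⟩ := by
  rw [mul_def]
  refine Ext.ext ?_ (mul_one _)
  show x.u * (t * (μ 1 1)⁻¹) * μ x.g 1 = t * x.u
  rw [mu_one_right hμ x.g]
  apply Units.ext; push_cast; field_simp

lemma iota_central (t : ℂˣ) (x : Ext μ hμ) : iota μ hμ t * x = x * iota μ hμ t := by
  rw [iota_mul, mul_iota]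

lemma iota_one : iota μ hμ 1 = 1 := by
  rw [iota, one_mul]; rfl

lemma iota_inj {s t : ℂˣ} (h : iota μ hμ s = iota μ hμ t) : s = t := by
  have := congrArg Ext.u h
  exact mul_right_cancel this

lemma iota_eq_one {t : ℂˣ} (h : iota μ hμ t = 1) : t = 1 := by
  apply iota_inj (hμ := hμ); rw [h, iota_one]

lemma eq_iota_of_g_eq_one (x : Ext μ hμ) (h : x.g = 1) : x = iota μ hμ (x.u * μ 1 1) := by
  cases x with
  | mk u g =>
    simp only at h
    subst h
    rw [iota]
    refine Ext.ext ?_ rfl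
    show u = u * μ 1 1 * (μ 1 1)⁻¹
    rw [mul_assoc, mul_inv_cancel, mul_one]

lemma iota_pull (t : ℂˣ) (x y : Ext μ hμ) : x * (iota μ hμ t * y) = iota μ hμ t * (x * y) := by
  rw [← mul_assoc, ← iota_central, mul_assoc]

lemma iota_merge (s t : ℂˣ) (x : Ext μ hμ) :
    iota μ hμ s * (iota μ hμ t * x) = iota μ hμ (s*t) * x := by
  rw [iota_mul, iota_mul, iota_mul]
  exact Ext.ext (mul_assoc _ _ _).symm rfl


lemma iota_mul_iota (st : ℂˣ) (t : ℂˣ) :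
    iota μ hμ st * iota μ hμ t = iota μ hμ (st * t) := by
  rw [iota_mul]
  exact Ext.ext (mul_assoc _ _ _).symm rfl

lemma exists_root (z : ℂˣ) (n : ℕ) (hn : 0 < n) : ∃ w : ℂˣ, w ^ n = z := by
  obtain ⟨c, hc⟩ := Complex.isAlgClosed.exists_pow_nat_eq (z : ℂ) hn
  have hc0 : c ≠ 0 := by
    intro h; rw [h, zero_pow hn.ne'] at hc; exact z.ne_zero hc.symm
  refine ⟨Units.mk0 c hc0, ?_⟩
  apply Units.ext
  simpa using hc

lemma exists_lift2 (hμ : IsC μ) (p : GG) (hp : p * p = 1) :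
    ∃ X : Ext μ hμ, X.g = p ∧ X * X = 1 := by
  obtain ⟨t, ht⟩ := exists_root (μ p p * μ 1 1)⁻¹ 2 (by norm_num)
  refine ⟨⟨t, p⟩, rfl, ?_⟩
  rw [mul_def, one_def]
  refine Ext.ext ?_ hp
  show t * t * μ p p = (μ 1 1)⁻¹
  have h2 : t * t = (μ p p * μ 1 1)⁻¹ := by rw [← ht, pow_two]
  rw [h2]
  apply Units.ext; push_cast; field_simp

lemma exists_lift3 (hμ : IsC μ) (p : GG) (hp : p * (p * p) = 1) :
    ∃ X : Ext μ hμ, X.g = p ∧ X * (X * X) = 1 := by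
  obtain ⟨t, ht⟩ := exists_root (μ p p * μ p (p*p) * μ 1 1)⁻¹ 3 (by norm_num)
  refine ⟨⟨t, p⟩, rfl, ?_⟩
  rw [mul_def, mul_def, one_def]
  refine Ext.ext ?_ hp
  show t * (t * t * μ p p) * μ p (p*p) = (μ 1 1)⁻¹
  have h3 : t * (t * t) = (μ p p * μ p (p*p) * μ 1 1)⁻¹ := by
    rw [← ht, pow_succ, pow_two, mul_assoc]
  calc t * (t * t * μ p p) * μ p (p*p)
      = (t * (t * t)) * (μ p p * μ p (p*p)) := by
        apply Units.ext; simp only [Units.val_mul]; ring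
    _ = (μ 1 1)⁻¹ := by rw [h3]; apply Units.ext; push_cast; field_simp

section Words

variable (A B : Ext μ hμ)

lemma fix_AB (hA : A * A = 1) (hB : B * (B * B) = 1)
    (hg : (A.g * B.g) * (A.g * B.g) = 1) :
    ∃ B' : Ext μ hμ, B'.g = B.g ∧ B' * (B' * B') = 1 ∧ (A * B') * (A * B') = 1 := by
  have hA' : ∀ x : Ext μ hμ, A * (A * x) = x := fun x => by
    rw [← mul_assoc, hA, one_mul]
  have hB' : ∀ x : Ext μ hμ, B * (B * (B * x)) = x := fun x => by
    rw [← mul_assoc, ← mul_assoc, mul_assoc B B B, hB, one_mul]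
  set γ : ℂˣ := ((A*B)*(A*B)).u * μ 1 1 with hγ
  have hC0 : (A*B)*(A*B) = iota μ hμ γ := by
    apply eq_iota_of_g_eq_one
    show (A.g * B.g) * (A.g * B.g) = 1
    exact hg
  have hC : A*(B*(A*B)) = iota μ hμ γ := by rw [← hC0, mul_assoc]
  have h2 : A*B*A = iota μ hμ γ * B⁻¹ := by
    rw [← hC0]; group
  have h3 : (A*B*A)*((A*B*A)*(A*B*A)) = 1 := by
    have e : (A*B*A)*((A*B*A)*(A*B*A)) = A*(B*(A*(A*(B*(A*(A*(B*A))))))) := by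
      group
    rw [e, hA', hA', hB', hA]
  have h4 : (A*B*A)*((A*B*A)*(A*B*A)) = iota μ hμ (γ*(γ*γ)) := by
    rw [h2]
    have hBinv : B⁻¹*(B⁻¹*B⁻¹) = 1 := by
      have e : B⁻¹*(B⁻¹*B⁻¹) = (B*(B*B))⁻¹ := by group
      rw [e, hB, inv_one]
    have e : (iota μ hμ γ * B⁻¹)*((iota μ hμ γ * B⁻¹)*(iota μ hμ γ * B⁻¹))
        = iota μ hμ (γ*γ*γ) * (B⁻¹*(B⁻¹*B⁻¹)) := by
      simp only [mul_assoc, iota_pull]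
      simp only [iota_merge]
    rw [e, hBinv, mul_one, show γ*γ*γ = γ*(γ*γ) from mul_assoc _ _ _]
  have hγ3 : γ * (γ * γ) = 1 := iota_eq_one (h4.symm.trans h3)
  refine ⟨iota μ hμ γ * B, ?_, ?_, ?_⟩
  · rw [iota_mul]
  · have e : (iota μ hμ γ * B)*((iota μ hμ γ * B)*(iota μ hμ γ * B))
        = iota μ hμ (γ*γ*γ) * (B*(B*B)) := by
      simp only [mul_assoc, iota_pull]
      simp only [iota_merge]
    rw [e, hB, mul_one, show γ*γ*γ = γ*(γ*γ) from mul_assoc _ _ _, hγ3, iota_one]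
  · have e : (A*(iota μ hμ γ * B))*(A*(iota μ hμ γ * B))
        = iota μ hμ (γ*γ) * (A*(B*(A*B))) := by
      simp only [mul_assoc, iota_pull]
      simp only [iota_merge]
    rw [e, hC, iota_mul_iota]
    rw [show γ*γ*γ = γ*(γ*γ) from mul_assoc _ _ _, hγ3, iota_one]
end Words

section Pulls

variable {X Y : Ext μ hμ} {k : ℂˣ}

lemma pull2 (hk : X*Y = iota μ hμ k * (Y*X)) :
    X*(Y*Y) = iota μ hμ (k*k) * ((Y*Y)*X) := by
  calc X*(Y*Y) = (X*Y)*Y := (mul_assoc _ _ _).symm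
    _ = (iota μ hμ k*(Y*X))*Y := by rw [hk]
    _ = iota μ hμ k*(Y*(X*Y)) := by rw [mul_assoc, mul_assoc]
    _ = iota μ hμ k*(Y*(iota μ hμ k*(Y*X))) := by rw [hk]
    _ = iota μ hμ k*(iota μ hμ k*(Y*(Y*X))) := by rw [iota_pull]
    _ = iota μ hμ (k*k)*((Y*Y)*X) := by rw [iota_merge, mul_assoc]

lemma pull3 (hk : X*Y = iota μ hμ k * (Y*X)) :
    X*(Y*(Y*Y)) = iota μ hμ (k*(k*k)) * ((Y*(Y*Y))*X) := by
  calc X*(Y*(Y*Y)) = (X*(Y*Y))*Y := by group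
    _ = (iota μ hμ (k*k)*((Y*Y)*X))*Y := by rw [pull2 hk]
    _ = iota μ hμ (k*k)*((Y*Y)*(X*Y)) := by rw [mul_assoc, mul_assoc]
    _ = iota μ hμ (k*k)*((Y*Y)*(iota μ hμ k*(Y*X))) := by rw [hk]
    _ = iota μ hμ (k*k)*(iota μ hμ k*((Y*Y)*(Y*X))) := by rw [iota_pull]
    _ = iota μ hμ (k*k*k)*((Y*(Y*Y))*X) := by rw [iota_merge]; congr 1; group
    _ = iota μ hμ (k*(k*k))*((Y*(Y*Y))*X) := by rw [mul_assoc]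

lemma partner_sq (hk : X*Y = iota μ hμ k * (Y*X)) (hY : Y*Y = 1) : k*k = 1 := by
  have h := pull2 hk
  rw [hY, mul_one, one_mul] at h
  exact iota_eq_one (right_eq_mul.mp h).symm.symm

lemma partner_cube (hk : X*Y = iota μ hμ k * (Y*X)) (hY : Y*(Y*Y) = 1) : k*(k*k) = 1 := by
  have h := pull3 hk
  rw [hY, mul_one, one_mul] at h
  exact iota_eq_one (right_eq_mul.mp h).symm.symm

lemma hk_swap (hk : X*Y = iota μ hμ k * (Y*X)) :
    Y*X = iota μ hμ k⁻¹ * (X*Y) := by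
  rw [hk, ← mul_assoc, iota_mul_iota, inv_mul_cancel, iota_one, one_mul]

lemma comm_scalar (X Y : Ext μ hμ) (hμ' : IsC μ) (h : X.g*Y.g = Y.g*X.g) :
    X*Y = iota μ hμ (μ X.g Y.g * (μ Y.g X.g)⁻¹) * (Y*X) := by
  rw [mul_def X Y, mul_def Y X, iota_mul]
  refine Ext.ext ?_ h
  show X.u * Y.u * μ X.g Y.g = (μ X.g Y.g * (μ Y.g X.g)⁻¹) * (Y.u * X.u * μ Y.g X.g)
  apply Units.ext
  push_cast
  field_simp

lemma k_eq_one {k : ℂˣ} (h2 : k*k = 1) (h3 : k*(k*k) = 1) : k = 1 := by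
  rw [h2, mul_one] at h3; exact h3

lemma inv_sq_one {k : ℂˣ} (h : k⁻¹*k⁻¹ = 1) : k*k = 1 := by
  have : (k*k)⁻¹ = 1 := by rw [mul_inv, h]
  exact inv_eq_one.mp this

lemma inv_cube_one {k : ℂˣ} (h : k⁻¹*(k⁻¹*k⁻¹) = 1) : k*(k*k) = 1 := by
  have : (k*(k*k))⁻¹ = 1 := by rw [mul_inv, mul_inv, h]
  exact inv_eq_one.mp this

lemma triangle (Ax C : Ext μ hμ) (hAx : Ax*Ax = 1) (hAC : (Ax*C)*(Ax*C) = 1)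
    (hC : C*(C*C) = 1) : (Ax*C)*Ax = C*C := by
  have h1 : ((Ax*C)*Ax)*C = 1 := by rw [mul_assoc (Ax*C) Ax C]; exact hAC
  have h2 : (Ax*C)*Ax = C⁻¹ := eq_inv_of_mul_eq_one_left h1
  rw [h2, inv_eq_of_mul_eq_one_right hC]

lemma cube_trick (B C Ax : Ext μ hμ) (k : ℂˣ)
    (hk : B*C = iota μ hμ k * (C*B))
    (hBA : B*Ax = Ax*B) (hACA : (Ax*C)*Ax = C*C) : k = 1 := by
  have h1 : B*(C*C) = iota μ hμ (k*k) * ((C*C)*B) := pull2 hk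
  have h2 : B*(C*C) = iota μ hμ k * ((C*C)*B) := by
    calc B*(C*C) = B*((Ax*C)*Ax) := by rw [hACA]
      _ = ((B*Ax)*C)*Ax := by group
      _ = ((Ax*B)*C)*Ax := by rw [hBA]
      _ = Ax*((B*C)*Ax) := by group
      _ = Ax*(iota μ hμ k*((C*B)*Ax)) := by rw [hk, mul_assoc]
      _ = iota μ hμ k*(Ax*((C*B)*Ax)) := by rw [iota_pull]
      _ = iota μ hμ k*(((Ax*C)*Ax)*B) := by rw [show Ax*((C*B)*Ax) = ((Ax*C)*(B*Ax)) by group,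
            hBA, show (Ax*C)*(Ax*B) = ((Ax*C)*Ax)*B by group]
      _ = iota μ hμ k*((C*C)*B) := by rw [hACA]
  have h3 : iota μ hμ (k*k) = iota μ hμ k := mul_right_cancel (h1.symm.trans h2)
  have h4 : k*k = k := iota_inj h3
  calc k = k⁻¹*(k*k) := by group
    _ = k⁻¹*k := by rw [h4]
    _ = 1 := inv_mul_cancel k

end Pulls

section WordMap

variable (A B : Ext μ hμ)

def wrd (x : G3) : Ext μ hμ :=
  if x = 1 then 1 else if x = pb then B else if x = pb*pb then B*B
  else if x = pa then A else if x = pa*pb then A*B else A*(B*B)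

lemma wrd_1 : wrd A B 1 = 1 := if_pos rfl
lemma wrd_b : wrd A B pb = B := by
  rw [wrd, if_neg (by decide), if_pos rfl]
lemma wrd_b2 : wrd A B (pb*pb) = B*B := by
  rw [wrd, if_neg (by decide), if_neg (by decide), if_pos rfl]
lemma wrd_a : wrd A B pa = A := by
  rw [wrd, if_neg (by decide), if_neg (by decide), if_neg (by decide), if_pos rfl]
lemma wrd_ab : wrd A B (pa*pb) = A*B := by
  rw [wrd, if_neg (by decide), if_neg (by decide), if_neg (by decide), if_neg (by decide),
    if_pos rfl]
lemma wrd_ab2 : wrd A B (pa*(pb*pb)) = A*(B*B) := by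
  rw [wrd, if_neg (by decide), if_neg (by decide), if_neg (by decide), if_neg (by decide),
    if_neg (by decide)]

lemma hA' (hA : A*A = 1) : ∀ x : Ext μ hμ, A*(A*x) = x := fun x => by
  rw [← mul_assoc, hA, one_mul]

lemma hB' (hB : B*(B*B) = 1) : ∀ x : Ext μ hμ, B*(B*(B*x)) = x := fun x => by
  rw [← mul_assoc, ← mul_assoc, mul_assoc B B B, hB, one_mul]

lemma hBAB (hA : A*A = 1) (hAB : (A*B)*(A*B) = 1) : B*(A*B) = A := by
  have h1 : A*(B*(A*B)) = 1 := by rw [← mul_assoc]; exact hAB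
  have h2 : B*(A*B) = A⁻¹ := eq_inv_of_mul_eq_one_right h1
  rw [h2, inv_eq_of_mul_eq_one_right hA]

lemma hBA (hA : A*A = 1) (hB : B*(B*B) = 1) (hAB : (A*B)*(A*B) = 1) :
    B*A = A*(B*B) := by
  calc B*A = B*(A*(B*(B*B))) := by rw [hB, mul_one]
    _ = (B*(A*B))*(B*B) := by group
    _ = A*(B*B) := by rw [hBAB A B hA hAB]

lemma hBA' (hA : A*A = 1) (hB : B*(B*B) = 1) (hAB : (A*B)*(A*B) = 1) :
    ∀ x : Ext μ hμ, B*(A*x) = A*(B*(B*x)) := fun x => by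
  rw [← mul_assoc, hBA A B hA hB hAB, mul_assoc, mul_assoc]

lemma stepB (hA : A*A = 1) (hB : B*(B*B) = 1) (hAB : (A*B)*(A*B) = 1) :
    ∀ x, wrd A B (pb*x) = B * wrd A B x := by
  intro x
  rcases cls x with rfl|rfl|rfl|rfl|rfl|rfl
  · rw [mul_one, wrd_b, wrd_1, mul_one]
  · rw [wrd_b2, wrd_b]
  · rw [show pb*(pb*pb) = 1 by decide, wrd_1, wrd_b2, hB]
  · rw [show pb*pa = pa*(pb*pb) by decide, wrd_ab2, wrd_a, hBA A B hA hB hAB]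
  · rw [show pb*(pa*pb) = pa by decide, wrd_a, wrd_ab, hBAB A B hA hAB]
  · rw [show pb*(pa*(pb*pb)) = pa*pb by decide, wrd_ab, wrd_ab2, hBA' A B hA hB hAB,
      hB' B hB]

lemma stepA (hA : A*A = 1) : ∀ x, wrd A B (pa*x) = A * wrd A B x := by
  intro x
  rcases cls x with rfl|rfl|rfl|rfl|rfl|rfl
  · rw [mul_one, wrd_a, wrd_1, mul_one]
  · rw [wrd_ab, wrd_b]
  · rw [wrd_ab2, wrd_b2]
  · rw [show pa*pa = 1 by decide, wrd_1, wrd_a, hA]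
  · rw [show pa*(pa*pb) = pb by decide, wrd_b, wrd_ab, hA' A hA]
  · rw [show pa*(pa*(pb*pb)) = pb*pb by decide, wrd_b2, wrd_ab2, hA' A hA]

lemma wmul (hA : A*A = 1) (hB : B*(B*B) = 1) (hAB : (A*B)*(A*B) = 1) :
    ∀ x y, wrd A B (x*y) = wrd A B x * wrd A B y := by
  intro x y
  rcases cls x with rfl|rfl|rfl|rfl|rfl|rfl
  · rw [one_mul, wrd_1, one_mul]
  · rw [wrd_b]; exact stepB A B hA hB hAB y
  · rw [wrd_b2, mul_assoc, stepB A B hA hB hAB, stepB A B hA hB hAB, mul_assoc]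
  · rw [wrd_a]; exact stepA A B hA y
  · rw [wrd_ab, mul_assoc, stepA A B hA, stepB A B hA hB hAB, mul_assoc]
  · rw [wrd_ab2, mul_assoc, stepA A B hA, mul_assoc, stepB A B hA hB hAB,
      stepB A B hA hB hAB, mul_assoc, mul_assoc]

lemma wg (e : G3 →* GG) (hAg : A.g = e pa) (hBg : B.g = e pb) :
    ∀ x, (wrd A B x).g = e x := by
  intro x
  rcases cls x with rfl|rfl|rfl|rfl|rfl|rfl
  · rw [wrd_1, g_one, map_one]
  · rw [wrd_b, hBg]
  · rw [wrd_b2, g_mul, hBg, map_mul]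
  · rw [wrd_a, hAg]
  · rw [wrd_ab, g_mul, hAg, hBg, map_mul]
  · rw [wrd_ab2, g_mul, g_mul, hAg, hBg, map_mul, map_mul]

lemma wrd_commute (C : Ext μ hμ) (hAC : Commute A C) (hBC : Commute B C) :
    ∀ x, Commute (wrd A B x) C := by
  intro x
  rcases cls x with rfl|rfl|rfl|rfl|rfl|rfl
  · rw [wrd_1]; exact Commute.one_left C
  · rw [wrd_b]; exact hBC
  · rw [wrd_b2]; exact hBC.mul_left hBC
  · rw [wrd_a]; exact hAC
  · rw [wrd_ab]; exact hAC.mul_left hBC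
  · rw [wrd_ab2]; exact hAC.mul_left (hBC.mul_left hBC)

lemma wrd_commute2 (A2 B2 : Ext μ hμ) (cAA : Commute A A2) (cAB : Commute A B2)
    (cBA : Commute B A2) (cBB : Commute B B2) :
    ∀ s t, Commute (wrd A B s) (wrd A2 B2 t) := by
  intro s t
  rcases cls t with rfl|rfl|rfl|rfl|rfl|rfl
  · rw [wrd_1]; exact Commute.one_right _
  · rw [wrd_b]; exact wrd_commute A B B2 cAB cBB s
  · rw [wrd_b2]; exact (wrd_commute A B B2 cAB cBB s).mul_right (wrd_commute A B B2 cAB cBB s)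
  · rw [wrd_a]; exact wrd_commute A B A2 cAA cBA s
  · rw [wrd_ab]; exact (wrd_commute A B A2 cAA cBA s).mul_right (wrd_commute A B B2 cAB cBB s)
  · rw [wrd_ab2]; exact (wrd_commute A B A2 cAA cBA s).mul_right
      ((wrd_commute A B B2 cAB cBB s).mul_right (wrd_commute A B B2 cAB cBB s))

end WordMap

def Pg : GG := (pa, 1)
def Qg : GG := (1, pa)

lemma dicho (μ : GG → GG → ℂˣ) (hμ : IsC μ) :
    (∃ f : GG → ℂˣ, ∀ x y, μ x y = f x * f y * (f (x*y))⁻¹) ∨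
      μ Pg Qg = - μ Qg Pg := by
  obtain ⟨A1, hA1g, hA1⟩ := exists_lift2 hμ (pa,1) (by decide)
  obtain ⟨B10, hB10g, hB10⟩ := exists_lift3 hμ (pb,1) (by decide)
  obtain ⟨B1, hB1g', hB1, hAB1⟩ := fix_AB A1 B10 hA1 hB10 (by rw [hA1g, hB10g]; decide)
  have hB1g : B1.g = (pb,1) := hB1g'.trans hB10g
  obtain ⟨A2, hA2g, hA2⟩ := exists_lift2 hμ ((1:G3),pa) (by decide)
  obtain ⟨B20, hB20g, hB20⟩ := exists_lift3 hμ ((1:G3),pb) (by decide)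
  obtain ⟨B2, hB2g', hB2, hAB2⟩ := fix_AB A2 B20 hA2 hB20 (by rw [hA2g, hB20g]; decide)
  have hB2g : B2.g = ((1:G3),pb) := hB2g'.trans hB20g
  -- the obstruction scalar
  have hcs := comm_scalar A1 A2 hμ (by rw [hA1g, hA2g]; decide)
  have hk2 : (μ A1.g A2.g * (μ A2.g A1.g)⁻¹) * (μ A1.g A2.g * (μ A2.g A1.g)⁻¹) = 1 :=
    partner_sq hcs hA2
  set k : ℂˣ := μ A1.g A2.g * (μ A2.g A1.g)⁻¹ with hkdef
  have hkv : (k : ℂ) * (k : ℂ) = 1 := by rw [← Units.val_mul, hk2, Units.val_one]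
  rcases mul_self_eq_one_iff.mp hkv with hone | hneg
  swap
  · -- k = -1 : second alternative
    right
    have h1 : (μ A1.g A2.g : ℂ) * ((μ A2.g A1.g : ℂ))⁻¹ = -1 := by
      rw [hkdef] at hneg
      simpa using hneg
    apply Units.ext
    rw [Units.val_neg]
    rw [hA1g, hA2g] at h1
    show (μ Pg Qg : ℂ) = -(μ Qg Pg : ℂ)
    rw [show Pg = ((pa,1):GG) from rfl, show Qg = (((1:G3),pa):GG) from rfl]
    field_simp at h1
    exact h1
  · -- k = 1 : build the splitting
    have hk1 : k = 1 := Units.val_eq_one.mp hone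
    rw [hk1, iota_one, one_mul] at hcs
    -- hcs : A1 * A2 = A2 * A1
    -- A1 vs B2
    have hdcs := comm_scalar A1 B2 hμ (by rw [hA1g, hB2g]; decide)
    have hd : A1*B2 = B2*A1 := by
      have h2 := inv_sq_one (partner_sq (hk_swap hdcs) hA1)
      have h3 := partner_cube hdcs hB2
      rw [k_eq_one h2 h3, iota_one, one_mul] at hdcs
      exact hdcs
    -- B1 vs A2
    have hgcs := comm_scalar B1 A2 hμ (by rw [hB1g, hA2g]; decide)
    have hg : B1*A2 = A2*B1 := by
      have h2 := partner_sq hgcs hA2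
      have h3 := inv_cube_one (partner_cube (hk_swap hgcs) hB1)
      rw [k_eq_one h2 h3, iota_one, one_mul] at hgcs
      exact hgcs
    -- B1 vs B2
    have hecs := comm_scalar B1 B2 hμ (by rw [hB1g, hB2g]; decide)
    have he : B1*B2 = B2*B1 := by
      have hACA := triangle A2 B2 hA2 hAB2 hB2
      have := cube_trick B1 B2 A2 _ hecs hg hACA
      rw [this, iota_one, one_mul] at hecs
      exact hecs
    -- the splitting homomorphism
    left
    set σ : GG → Ext μ hμ := fun x => wrd A1 B1 x.1 * wrd A2 B2 x.2 with hσ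
    have hcomm : ∀ s t, Commute (wrd A1 B1 s) (wrd A2 B2 t) :=
      wrd_commute2 A1 B1 A2 B2 hcs hd hg he
    have σmul : ∀ x y, σ (x*y) = σ x * σ y := by
      intro x y
      show wrd A1 B1 (x.1*y.1) * wrd A2 B2 (x.2*y.2)
        = (wrd A1 B1 x.1 * wrd A2 B2 x.2) * (wrd A1 B1 y.1 * wrd A2 B2 y.2)
      rw [wmul A1 B1 hA1 hB1 hAB1, wmul A2 B2 hA2 hB2 hAB2]
      exact ((hcomm y.1 x.2).symm.mul_mul_mul_comm _ _).symm
    have σg : ∀ x, (σ x).g = x := by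
      intro x
      show (wrd A1 B1 x.1).g * (wrd A2 B2 x.2).g = x
      rw [wg A1 B1 (MonoidHom.inl G3 G3) hA1g hB1g x.1,
        wg A2 B2 (MonoidHom.inr G3 G3) hA2g hB2g x.2]
      simp
    refine ⟨fun x => ((σ x).u)⁻¹, ?_⟩
    intro x y
    have hu : (σ (x*y)).u = (σ x).u * (σ y).u * μ x y := by
      rw [σmul x y]
      show (σ x).u * (σ y).u * μ (σ x).g (σ y).g = _
      rw [σg x, σg y]
    rw [inv_inv, hu]
    apply Units.ext
    push_cast
    field_simp

lemma nu_cocycle : IsC (fun x y => nuZero x y) := by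
  intro x y z
  have hs : ∀ p : G3, Equiv.Perm.sign p = 1 ∨ Equiv.Perm.sign p = -1 := fun p =>
    Int.units_eq_one_or _
  simp only [nuZero, Prod.fst_mul, Prod.snd_mul, map_mul]
  rcases hs x.1 with h1|h1 <;> rcases hs y.1 with h2|h2 <;>
    rcases hs y.2 with h3|h3 <;> rcases hs z.2 with h4|h4 <;>
      simp [h1, h2, h3, h4]

lemma nu_PQ : nuZero Pg Qg = -1 := by
  rw [nuZero, if_pos]
  constructor <;> decide

lemma nu_QP : nuZero Qg Pg = 1 := by
  rw [nuZero, if_neg]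
  rintro ⟨h, -⟩
  revert h
  decide

lemma mu_nu_cocycle (μ : GG → GG → ℂˣ) (hμ : IsC μ) :
    IsC (fun x y => μ x y * nuZero x y) := by
  intro x y z
  simp only
  rw [mul_mul_mul_comm, mul_mul_mul_comm (μ x (y*z)), hμ x y z, nu_cocycle x y z]

end S3C

/-- every 2-cocycle `μ` on `S₃ × S₃` with values in `ℂˣ` is either a
2-coboundary, or `μ·ν₀` is a 2-coboundary (so `H²(S₃ × S₃, U(1)) ≅ ℤ₂`). -/
theorem S3xS3_two_cocycle_trivial_or_nuZero
    (μ : (Equiv.Perm (Fin 3) × Equiv.Perm (Fin 3)) →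
         (Equiv.Perm (Fin 3) × Equiv.Perm (Fin 3)) → ℂˣ)
    (hμ : ∀ x y z : Equiv.Perm (Fin 3) × Equiv.Perm (Fin 3),
      μ x y * μ (x * y) z = μ x (y * z) * μ y z) :
    (∃ f : Equiv.Perm (Fin 3) × Equiv.Perm (Fin 3) → ℂˣ,
      ∀ x y, μ x y = f x * f y * (f (x * y))⁻¹) ∨
    (∃ f : Equiv.Perm (Fin 3) × Equiv.Perm (Fin 3) → ℂˣ,
      ∀ x y, μ x y * nuZero x y = f x * f y * (f (x * y))⁻¹) := by
  rcases S3C.dicho μ hμ with h | hPQ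
  · exact Or.inl h
  · rcases S3C.dicho (fun x y => μ x y * nuZero x y) (S3C.mu_nu_cocycle μ hμ) with h | h2
    · exact Or.inr h
    · exfalso
      simp only [S3C.nu_PQ, S3C.nu_QP, mul_one] at h2
      -- h2 : μ Pg Qg * (-1) = -(μ Qg Pg)
      have v2 := congrArg Units.val h2
      have v1 := congrArg Units.val hPQ
      simp only [Units.val_mul, Units.val_neg, Units.val_one] at v1 v2
      rw [v1] at v2
      have h0 : (μ S3C.Qg S3C.Pg : ℂ) = 0 := by linear_combination (1/2 : ℂ) * v2
      exact (μ S3C.Qg S3C.Pg).ne_zero h0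
end

section
/- The function ν₀ : (S₃ × S₃) × (S₃ × S₃) → ℂˣ defined by ν₀((g₁,g₂),(h₁,h₂)) := -1 if g₁ and h₂ are both odd permutations and 1 otherwise (i.e. ν₀((g₁,g₂),(h₁,h₂)) = (-1)^{ε(g₁)·ε(h₂)} where ε(g) = 0 or 1 according to sgn(g) = ±1) is a 2-cocycle on S₃ × S₃ with values in ℂˣ, and it is not a 2-coboundary. -/
/-- `ν₀` is a 2-cocycle on `S₃ × S₃` with values in `ℂˣ` and it is
not a 2-coboundary (it represents the generator of `H²(S₃ × S₃, U(1)) ≅ ℤ₂`). -/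
theorem nuZero_is_cocycle_not_coboundary :
    (∀ x y z : Equiv.Perm (Fin 3) × Equiv.Perm (Fin 3),
      nuZero x y * nuZero (x * y) z = nuZero x (y * z) * nuZero y z) ∧
    ¬ ∃ f : Equiv.Perm (Fin 3) × Equiv.Perm (Fin 3) → ℂˣ,
        ∀ x y : Equiv.Perm (Fin 3) × Equiv.Perm (Fin 3),
          nuZero x y = f x * f y * (f (x * y))⁻¹ := by
  constructor
  · intro x y z
    have hx := Int.units_eq_one_or (Equiv.Perm.sign x.1)
    have hy1 := Int.units_eq_one_or (Equiv.Perm.sign y.1)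
    have hy2 := Int.units_eq_one_or (Equiv.Perm.sign y.2)
    have hz := Int.units_eq_one_or (Equiv.Perm.sign z.2)
    unfold nuZero
    simp only [Prod.fst_mul, Prod.snd_mul, map_mul]
    rcases hx with hx | hx <;> rcases hy1 with hy1 | hy1 <;>
      rcases hy2 with hy2 | hy2 <;> rcases hz with hz | hz <;>
      simp [hx, hy1, hy2, hz]
  · rintro ⟨f, hf⟩
    set τ : Equiv.Perm (Fin 3) := Equiv.swap 0 1 with hτ
    have hsτ : Equiv.Perm.sign τ = -1 := Equiv.Perm.sign_swap (by decide)
    set a : Equiv.Perm (Fin 3) × Equiv.Perm (Fin 3) := (τ, 1) with ha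
    set b : Equiv.Perm (Fin 3) × Equiv.Perm (Fin 3) := (1, τ) with hb
    have hcomm : a * b = b * a := by
      simp [ha, hb, Prod.ext_iff]
    have h1 : nuZero a b = -1 := by
      simp [nuZero, ha, hb, hsτ]
    have h2 : nuZero b a = 1 := by
      simp [nuZero, ha, hb]
    have : nuZero a b = nuZero b a := by
      rw [hf a b, hf b a, hcomm, mul_comm (f a) (f b)]
    rw [h1, h2] at this
    exact absurd this (by norm_num)
end

section
/- Let Γ := (ℤ/3 × ℤ/3) ⋊ ℤ/2 with ℤ/2 acting by negation, and for n ∈ ℤ let ω_n(((i₁,j₁),k₁),((i₂,j₂),k₂)) := exp(2πi·n·i₁·j₂·(-1)^{k₁}/3). Then ω₁ is not a 2-coboundary, and every 2-cocycle on Γ with values in ℂˣ is cohomologous to ω_n for some n ∈ {0,1,2}. (Equivalently, H²(Γ, U(1)) ≅ ℤ₃, generated by the class of ω₁.) -/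
/-- The primitive cube root of unity `exp(2πi/3)` as a unit of `ℂ`. -/
noncomputable def zeta3 : ℂˣ :=
  Units.mk (Complex.exp (2 * Real.pi * Complex.I / 3))
    (Complex.exp (-(2 * Real.pi * Complex.I / 3)))
    (by rw [← Complex.exp_add, add_neg_cancel, Complex.exp_zero])
    (by rw [← Complex.exp_add, neg_add_cancel, Complex.exp_zero])

/-- Multiplication of the semidirect product `Γ = (ℤ/3 × ℤ/3) ⋊ ℤ/2`, where the
generator of `ℤ/2` acts by negation. -/
def gammaMul (x y : (ZMod 3 × ZMod 3) × ZMod 2) : (ZMod 3 × ZMod 3) × ZMod 2 :=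
  ((x.1.1 + (-1 : ZMod 3) ^ x.2.val * y.1.1,
    x.1.2 + (-1 : ZMod 3) ^ x.2.val * y.1.2), x.2 + y.2)

/-- `ω_n(((i₁,j₁),k₁),((i₂,j₂),k₂)) := exp(2πi·n·i₁·j₂·(-1)^{k₁}/3)`. -/
noncomputable def omegaGamma (n : ℤ)
    (x y : (ZMod 3 × ZMod 3) × ZMod 2) : ℂˣ :=
  zeta3 ^ (n * (x.1.1.val : ℤ) * (y.1.2.val : ℤ) * (-1 : ℤ) ^ x.2.val)

abbrev Gam := (ZMod 3 × ZMod 3) × ZMod 2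

lemma zeta3_cube : zeta3 ^ (3 : ℕ) = 1 := by
  ext
  push_cast [zeta3]
  rw [← Complex.exp_nat_mul]
  norm_num
  have : (3 : ℂ) * (2 * (Real.pi:ℂ) * Complex.I / 3) = 2 * Real.pi * Complex.I := by ring
  rw [this, Complex.exp_two_pi_mul_I]

lemma zeta3_ne_one : zeta3 ≠ 1 := by
  intro h
  have h1 : Complex.exp (2 * Real.pi * Complex.I / 3) = 1 := congrArg Units.val h
  rw [Complex.exp_eq_one_iff] at h1
  obtain ⟨n, hn⟩ := h1
  have hpi : (Real.pi:ℂ) ≠ 0 := by exact_mod_cast Complex.ofReal_ne_zero.2 Real.pi_ne_zero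
  have h2 : (2 * (Real.pi:ℂ) * Complex.I) ≠ 0 := by
    simp [hpi, Complex.I_ne_zero]
  have h3 : (3 : ℂ) * n * (2 * (Real.pi:ℂ) * Complex.I) = 1 * (2 * (Real.pi:ℂ) * Complex.I) := by
    linear_combination -3 * hn
  have h3' := mul_right_cancel₀ h2 h3
  have h4 : ((3 * n : ℤ) : ℂ) = ((1:ℤ) : ℂ) := by push_cast; linear_combination h3'
  have := Int.cast_injective h4
  omega

lemma zeta3_sum : (zeta3 : ℂ)^2 + (zeta3:ℂ) + 1 = 0 := by
  have hc : (zeta3:ℂ)^3 = 1 := by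
    have := congrArg Units.val zeta3_cube
    push_cast at this; exact this
  have hne : (zeta3:ℂ) ≠ 1 := fun h => zeta3_ne_one (Units.ext h)
  have : ((zeta3:ℂ) - 1) * ((zeta3:ℂ)^2 + (zeta3:ℂ) + 1) = 0 := by
    linear_combination hc
  rcases mul_eq_zero.1 this with h | h
  · exact (hne (by linear_combination h)).elim
  · exact h

lemma cube_root_cases (u : ℂˣ) (h : u ^ (3:ℕ) = 1) :
    u = 1 ∨ u = zeta3 ∨ u = zeta3 ^ (2:ℕ) := by
  have hc : (u:ℂ)^3 = 1 := by
    have := congrArg Units.val h; push_cast at this; exact this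
  have hz3 : (zeta3:ℂ)^3 = 1 := by
    have := congrArg Units.val zeta3_cube; push_cast at this; exact this
  have hfac : ((u:ℂ) - 1) * ((u:ℂ) - zeta3) * ((u:ℂ) - (zeta3:ℂ)^2) = 0 := by
    linear_combination hc + ((u:ℂ) - (u:ℂ)^2) * zeta3_sum + ((u:ℂ) - 1) * hz3
  rcases mul_eq_zero.1 hfac with h1 | h1
  · rcases mul_eq_zero.1 h1 with h2 | h2
    · left; ext; push_cast; linear_combination h2
    · right; left; ext; linear_combination h2
  · right; right; ext; push_cast; linear_combination h1

lemma zeta3_zpow_congr {m m' : ℤ} (h : (m : ZMod 3) = (m' : ZMod 3)) :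
    zeta3 ^ m = zeta3 ^ m' := by
  have h3 : (3:ℤ) ∣ m - m' := by
    have : ((m - m' : ℤ) : ZMod 3) = 0 := by push_cast [h]; ring
    exact (ZMod.intCast_zmod_eq_zero_iff_dvd _ 3).1 this
  obtain ⟨k, hk⟩ := h3
  have hm : m = m' + 3 * k := by omega
  have hz : zeta3 ^ (3:ℤ) = 1 := by
    rw [show (3:ℤ) = ((3:ℕ):ℤ) by norm_num, zpow_natCast, zeta3_cube]
  rw [hm, zpow_add, zpow_mul, hz, one_zpow, mul_one]

def Ee (x y : Gam) : ℤ := (x.1.1.val : ℤ) * (y.1.2.val : ℤ) * (-1:ℤ) ^ x.2.val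

lemma omega_eq (n : ℤ) (x y : Gam) : omegaGamma n x y = zeta3 ^ (n * Ee x y) := by
  unfold omegaGamma Ee; ring_nf

lemma Ee_cocycle : ∀ x y z : Gam,
    ((Ee x y + Ee (gammaMul x y) z : ℤ) : ZMod 3)
      = ((Ee x (gammaMul y z) + Ee y z : ℤ) : ZMod 3) := by decide

lemma omega_cocycle (n : ℤ) : ∀ x y z : Gam,
    omegaGamma n x y * omegaGamma n (gammaMul x y) z
      = omegaGamma n x (gammaMul y z) * omegaGamma n y z := by
  intro x y z
  rw [omega_eq, omega_eq, omega_eq, omega_eq, ← zpow_add, ← zpow_add]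
  apply zeta3_zpow_congr
  push_cast
  have := Ee_cocycle x y z
  push_cast at this
  linear_combination (n : ZMod 3) * this

def gone : Gam := ((0,0),0)
def ginv (x : Gam) : Gam :=
  ((-((-1:ZMod 3) ^ x.2.val) * x.1.1, -((-1:ZMod 3) ^ x.2.val) * x.1.2), x.2)
def aaG : Gam := ((1,0),0)
def bbG : Gam := ((0,1),0)
def ssG : Gam := ((0,0),1)

lemma gmul_assoc : ∀ x y z : Gam, gammaMul (gammaMul x y) z = gammaMul x (gammaMul y z) := by
  decide
lemma gone_mul : ∀ x : Gam, gammaMul gone x = x := by decide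
lemma gmul_one : ∀ x : Gam, gammaMul x gone = x := by decide
lemma ginv_mul : ∀ x : Gam, gammaMul (ginv x) x = gone := by decide
lemma gmul_ginv : ∀ x : Gam, gammaMul x (ginv x) = gone := by decide

/-- existence of n-th roots in ℂˣ -/
lemma exists_root (u : ℂˣ) (n : ℕ) (hn : n ≠ 0) : ∃ c : ℂˣ, c ^ n = u := by
  have hu : (u : ℂ) ≠ 0 := u.ne_zero
  refine ⟨Units.mk0 (Complex.exp (Complex.log u / n)) (Complex.exp_ne_zero _), ?_⟩
  ext
  push_cast
  rw [Units.val_mk0, ← Complex.exp_nat_mul]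
  rw [mul_div_cancel₀]
  · exact Complex.exp_log hu
  · exact_mod_cast hn

/-- the central extension carrier -/
structure EE where
  g : Gam
  u : ℂˣ

section Ext

variable (ν : Gam → Gam → ℂˣ)

def emul (x y : EE) : EE := ⟨gammaMul x.g y.g, x.u * y.u * ν x.g y.g⟩
def eone : EE := ⟨gone, 1⟩
def einv (x : EE) : EE := ⟨ginv x.g, (x.u * ν x.g (ginv x.g))⁻¹⟩

variable (hc : ∀ x y z, ν x y * ν (gammaMul x y) z = ν x (gammaMul y z) * ν y z)
    (hn1 : ∀ x, ν gone x = 1) (hn2 : ∀ x, ν x gone = 1)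

def eGroup : Group EE :=
  letI : Mul EE := ⟨emul ν⟩
  letI : One EE := ⟨eone⟩
  letI : Inv EE := ⟨einv ν⟩
  Group.ofLeftAxioms
    (fun a b c => by
      show emul ν (emul ν a b) c = emul ν a (emul ν b c)
      unfold emul
      simp only [gmul_assoc]
      congr 1
      have := hc a.g b.g c.g
      calc a.u * b.u * ν a.g b.g * c.u * ν (gammaMul a.g b.g) c.g
          = a.u * b.u * c.u * (ν a.g b.g * ν (gammaMul a.g b.g) c.g) := by
              simp [mul_assoc, mul_comm, mul_left_comm]
        _ = a.u * b.u * c.u * (ν a.g (gammaMul b.g c.g) * ν b.g c.g) := by rw [hc]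
        _ = a.u * (b.u * c.u * ν b.g c.g) * ν a.g (gammaMul b.g c.g) := by
              simp [mul_assoc, mul_comm, mul_left_comm])
    (fun a => by
      show emul ν eone a = a
      unfold emul eone
      simp [gone_mul, hn1])
    (fun a => by
      show emul ν (einv ν a) a = eone
      unfold emul einv eone
      simp only [ginv_mul]
      have key : ν a.g (ginv a.g) = ν (ginv a.g) a.g := by
        have h := hc a.g (ginv a.g) a.g
        rw [gmul_ginv, ginv_mul, hn1, hn2, mul_one, one_mul] at h
        exact h
      congr 1
      rw [key]
      simp [mul_assoc])

def zc (u : ℂˣ) : EE := ⟨gone, u⟩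
def alpha0 : EE := ⟨aaG, 1⟩
def beta0 : EE := ⟨bbG, 1⟩
def sigma0 : EE := ⟨ssG, 1⟩

lemma gphi : ∀ i j : ZMod 3, ∀ k : ZMod 2,
    gammaMul (gammaMul ((i,0),0) ((0,j),0)) ((0,0),k) = ((i,j),k) := by decide

set_option maxHeartbeats 2000000 in
lemma main (ν : Gam → Gam → ℂˣ)
    (hc : ∀ x y z, ν x y * ν (gammaMul x y) z = ν x (gammaMul y z) * ν y z)
    (hn1 : ∀ x, ν gone x = 1) (hn2 : ∀ x, ν x gone = 1) :
    (ν aaG bbG * (ν bbG aaG)⁻¹) ^ (3:ℕ) = 1 ∧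
    (ν aaG bbG = ν bbG aaG →
      ∃ f : Gam → ℂˣ, ∀ x y, ν x y = f x * f y * (f (gammaMul x y))⁻¹) := by
  letI : Group EE := eGroup ν hc hn1 hn2
  have mul_def : ∀ x y : EE, x * y = ⟨gammaMul x.g y.g, x.u * y.u * ν x.g y.g⟩ :=
    fun _ _ => rfl
  have g_mul : ∀ x y : EE, (x * y).g = gammaMul x.g y.g := fun _ _ => rfl
  have one_def : (1 : EE) = ⟨gone, 1⟩ := rfl
  have g_inv : ∀ x : EE, (x⁻¹).g = ginv x.g := fun _ => rfl
  have zc_mul : ∀ (u : ℂˣ) (x : EE), zc u * x = ⟨x.g, u * x.u⟩ := by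
    intro u x; rw [mul_def]; unfold zc; simp [gone_mul, hn1]
  have mul_zc : ∀ (x : EE) (u : ℂˣ), x * zc u = ⟨x.g, x.u * u⟩ := by
    intro x u; rw [mul_def]; unfold zc; simp [gmul_one, hn2]
  have zc_comm : ∀ (u : ℂˣ) (x : EE), Commute (zc u) x := by
    intro u x; unfold Commute SemiconjBy; rw [zc_mul, mul_zc, mul_comm]
  have zc_zc : ∀ u v, zc u * zc v = zc (u * v) := by
    intro u v; rw [zc_mul]; rfl
  have zc_one : zc 1 = 1 := rfl
  have zc_pow : ∀ (u : ℂˣ) (n : ℕ), (zc u) ^ n = zc (u ^ n) := by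
    intro u n; induction n with
    | zero => rw [pow_zero, pow_zero, zc_one]
    | succ n ih => rw [pow_succ, pow_succ, ih, zc_zc]
  have zc_inv : ∀ u, (zc u)⁻¹ = zc u⁻¹ := by
    intro u
    apply inv_eq_of_mul_eq_one_right
    rw [zc_zc, mul_inv_cancel, zc_one]
  have zc_inj : ∀ u v, zc u = zc v → u = v := by
    intro u v h; exact congrArg EE.u h
  have elt_zc : ∀ x : EE, x.g = gone → x = zc x.u := by
    intro x h; cases x with | mk g u => cases h; rfl
  have conjpow : ∀ (s x : EE) (n : ℕ), (s * x * s⁻¹) ^ n = s * x ^ n * s⁻¹ := by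
    intro s x n; induction n with
    | zero => simp
    | succ n ih =>
        rw [pow_succ, pow_succ, ih]
        simp [mul_assoc]
  have normalize : ∀ (x0 : EE) (n : ℕ), n ≠ 0 → (x0 ^ n).g = gone →
      ∃ x : EE, x.g = x0.g ∧ x ^ n = 1 ∧ ∃ c, x = x0 * zc c := by
    intro x0 n hn hg
    obtain ⟨c, hcroot⟩ := exists_root ((x0 ^ n).u)⁻¹ n hn
    refine ⟨x0 * zc c, by rw [mul_zc], ?_, c, rfl⟩
    have h1 : x0 ^ n = zc ((x0 ^ n).u) := elt_zc _ hg
    have h2 : x0 ^ n * zc ((x0 ^ n).u)⁻¹ = 1 := by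
      nth_rewrite 1 [h1]
      rw [zc_zc, mul_inv_cancel, zc_one]
    rw [((zc_comm c x0).symm).mul_pow, zc_pow, hcroot]
    exact h2
  -- cube of alpha0 etc have trivial g-component
  have gcube : ∀ x : EE, (x ^ 3).g = gammaMul (gammaMul x.g x.g) x.g := by
    intro x
    rw [pow_succ, pow_two, g_mul, g_mul]
  have gsq : ∀ x : EE, (x ^ 2).g = gammaMul x.g x.g := by
    intro x; rw [pow_two, g_mul]
  obtain ⟨α, hαg, hα3, cα, hαc⟩ := normalize alpha0 3 (by norm_num)
    (by rw [gcube]; decide)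
  obtain ⟨β, hβg, hβ3, cβ, hβc⟩ := normalize beta0 3 (by norm_num)
    (by rw [gcube]; decide)
  obtain ⟨σ, hσg, hσ2, cσ, hσc⟩ := normalize sigma0 2 (by norm_num)
    (by rw [gsq]; decide)
  have hαg' : α.g = aaG := hαg
  have hβg' : β.g = bbG := hβg
  have hσg' : σ.g = ssG := hσg
  -- the commutator relation
  have hαe : α = ⟨aaG, 1 * cα⟩ := by rw [hαc, mul_zc]; rfl
  have hβe : β = ⟨bbG, 1 * cβ⟩ := by rw [hβc, mul_zc]; rfl
  have hσe : σ = ⟨ssG, 1 * cσ⟩ := by rw [hσc, mul_zc]; rfl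
  set lam := ν aaG bbG * (ν bbG aaG)⁻¹ with hlamdef
  have hcommrel : α * β = zc lam * (β * α) := by
    have habba : gammaMul aaG bbG = gammaMul bbG aaG := by decide
    rw [hαe, hβe]
    simp only [mul_def, zc, hn1, gone_mul, mul_one, one_mul, habba]
    congr 1
    rw [hlamdef]
    ext
    push_cast
    field_simp
  have hβαβ : β * α * β⁻¹ = zc lam⁻¹ * α := by
    have h1 : β * α = zc lam⁻¹ * (α * β) := by
      rw [hcommrel, ← mul_assoc, zc_zc, inv_mul_cancel, zc_one, one_mul]
    rw [h1, mul_assoc, mul_assoc, mul_inv_cancel, mul_one]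
  have hlam3 : lam ^ (3:ℕ) = 1 := by
    have h2 : (β * α * β⁻¹) ^ (3:ℕ) = 1 := by
      rw [conjpow, hα3, mul_one, mul_inv_cancel]
    rw [hβαβ, ((zc_comm lam⁻¹ α).mul_pow), zc_pow, hα3, mul_one] at h2
    have := zc_inj _ _ (h2.trans zc_one.symm)
    have h3 : (lam⁻¹) ^ (3:ℕ) = 1 := this
    rw [inv_pow] at h3
    exact (inv_eq_one.mp h3)
  refine ⟨hlam3, ?_⟩
  intro hlq
  have hlam1 : lam = 1 := by rw [hlamdef, hlq, mul_inv_cancel]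
  have hAB : α * β = β * α := by rw [hcommrel, hlam1, zc_one, one_mul]
  -- conjugation step for σ
  have sigma_step : ∀ γ : EE, γ ^ 3 = 1 → (σ * γ * σ⁻¹ * γ).g = gone →
      ∃ δ : EE, δ.g = γ.g ∧ δ ^ 3 = 1 ∧ σ * δ * σ⁻¹ = δ⁻¹ ∧ ∃ c, δ = γ * zc c := by
    intro γ h3 hg
    have h1 : σ * γ * σ⁻¹ * γ = zc ((σ * γ * σ⁻¹ * γ).u) := elt_zc _ hg
    set t := (σ * γ * σ⁻¹ * γ).u with htdef
    have h2 : σ * γ * σ⁻¹ = zc t * γ⁻¹ := by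
      rw [← h1]; group
    have ht3 : t ^ (3:ℕ) = 1 := by
      have e1 : (σ * γ * σ⁻¹) ^ (3:ℕ) = 1 := by
        rw [conjpow, h3, mul_one, mul_inv_cancel]
      rw [h2, (zc_comm t γ⁻¹).mul_pow, zc_pow, inv_pow, h3, inv_one, mul_one] at e1
      exact zc_inj _ _ (e1.trans zc_one.symm)
    have htinv : t⁻¹ = t ^ (2:ℕ) := by
      apply inv_eq_of_mul_eq_one_right
      rw [mul_comm, ← pow_succ]
      exact ht3
    refine ⟨γ * zc t, by rw [mul_zc], ?_, ?_, t, rfl⟩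
    · rw [((zc_comm t γ).symm).mul_pow, zc_pow, h3, ht3, one_mul, zc_one]
    · have e2 : σ * (γ * zc t) * σ⁻¹ = σ * γ * σ⁻¹ * zc t := by
        rw [← mul_assoc σ γ (zc t), mul_assoc (σ * γ) (zc t) σ⁻¹,
          ((zc_comm t σ⁻¹).eq), ← mul_assoc]
      rw [e2, h2, mul_inv_rev, zc_inv, htinv, mul_assoc, ← (zc_comm t γ⁻¹).eq,
        ← mul_assoc, zc_zc, ← pow_two]
  have gσconj : ∀ γ : EE, γ.g = aaG ∨ γ.g = bbG → (σ * γ * σ⁻¹ * γ).g = gone := by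
    intro γ hgam
    simp only [g_mul, g_inv, hσg']
    rcases hgam with h | h <;> rw [h] <;> decide
  obtain ⟨A, hAg, hA3, hSAconj, cA, hAC⟩ := sigma_step α hα3 (gσconj α (Or.inl hαg'))
  obtain ⟨B, hBg, hB3, hSBconj, cB, hBC⟩ := sigma_step β hβ3 (gσconj β (Or.inr hβg'))
  have hAg' : A.g = aaG := hAg.trans hαg'
  have hBg' : B.g = bbG := hBg.trans hβg'
  have hABc : A * B = B * A := by
    rw [hAC, hBC]
    exact (Commute.mul_left
      ((show Commute α β from hAB).mul_right ((zc_comm cB α).symm))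
      (zc_comm cA (β * zc cB))).eq
  -- powers indexed by ZMod
  have semiA : SemiconjBy σ A A⁻¹ := by
    unfold SemiconjBy
    rw [← hSAconj]; group
  have semiB : SemiconjBy σ B B⁻¹ := by
    unfold SemiconjBy
    rw [← hSBconj]; group
  have SApow : ∀ m : ℕ, σ * A ^ m = (A ^ m)⁻¹ * σ := by
    intro m
    have h := semiA.pow_right m
    unfold SemiconjBy at h
    rw [inv_pow] at h
    exact h
  have SBpow : ∀ m : ℕ, σ * B ^ m = (B ^ m)⁻¹ * σ := by
    intro m
    have h := semiB.pow_right m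
    unfold SemiconjBy at h
    rw [inv_pow] at h
    exact h
  have Apow_add : ∀ i i' : ZMod 3, A ^ (i + i').val = A ^ i.val * A ^ i'.val := by
    intro i i'
    rw [ZMod.val_add, ← pow_eq_pow_mod _ hA3, pow_add]
  have Bpow_add : ∀ i i' : ZMod 3, B ^ (i + i').val = B ^ i.val * B ^ i'.val := by
    intro i i'
    rw [ZMod.val_add, ← pow_eq_pow_mod _ hB3, pow_add]
  have Spow_add : ∀ k k' : ZMod 2, σ ^ (k + k').val = σ ^ k.val * σ ^ k'.val := by
    intro k k'
    rw [ZMod.val_add, ← pow_eq_pow_mod _ hσ2, pow_add]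
  have Aneg : ∀ i : ZMod 3, A ^ (-i).val = (A ^ i.val)⁻¹ := by
    intro i
    apply eq_inv_of_mul_eq_one_left
    rw [← Apow_add, neg_add_cancel, show ((0:ZMod 3)).val = 0 from rfl, pow_zero]
  have Bneg : ∀ i : ZMod 3, B ^ (-i).val = (B ^ i.val)⁻¹ := by
    intro i
    apply eq_inv_of_mul_eq_one_left
    rw [← Bpow_add, neg_add_cancel, show ((0:ZMod 3)).val = 0 from rfl, pow_zero]
  have cAB : ∀ m m' : ℕ, Commute (A ^ m) (B ^ m') := fun m m' =>
    (show Commute A B from hABc).pow_pow m m'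
  -- the homomorphism property
  have hom : ∀ x y : Gam,
      A ^ (gammaMul x y).1.1.val * B ^ (gammaMul x y).1.2.val * σ ^ (gammaMul x y).2.val
        = (A ^ x.1.1.val * B ^ x.1.2.val * σ ^ x.2.val)
          * (A ^ y.1.1.val * B ^ y.1.2.val * σ ^ y.2.val) := by
    rintro ⟨⟨i₁, j₁⟩, k₁⟩ ⟨⟨i₂, j₂⟩, k₂⟩
    rcases (show ∀ k : ZMod 2, k = 0 ∨ k = 1 by decide) k₁ with rfl | rfl
    · show A ^ (i₁ + (-1 : ZMod 3) ^ (0 : ZMod 2).val * i₂).val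
          * B ^ (j₁ + (-1 : ZMod 3) ^ (0 : ZMod 2).val * j₂).val
          * σ ^ ((0 : ZMod 2) + k₂).val = _
      simp only [show ((0 : ZMod 2)).val = 0 from rfl, pow_zero, one_mul,
        zero_add, mul_one, Apow_add, Bpow_add]
      simp only [mul_assoc]
      rw [(cAB i₂.val j₁.val).symm.left_comm]
    · show A ^ (i₁ + (-1 : ZMod 3) ^ (1 : ZMod 2).val * i₂).val
          * B ^ (j₁ + (-1 : ZMod 3) ^ (1 : ZMod 2).val * j₂).val
          * σ ^ ((1 : ZMod 2) + k₂).val = _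
      rw [show ((1 : ZMod 2)).val = 1 from rfl, pow_one, neg_one_mul, neg_one_mul,
        Apow_add, Bpow_add, Aneg, Bneg, Spow_add,
        show ((1 : ZMod 2)).val = 1 from rfl, pow_one]
      -- goal : A1 * (A2)⁻¹ * (B1 * (B2)⁻¹) * (σ * S2) = A1*B1*σ * (A2*B2*S2)
      simp only [mul_assoc]
      congr 1
      rw [← mul_assoc σ (A ^ i₂.val), SApow, mul_assoc,
        ← mul_assoc σ (B ^ j₂.val), SBpow, mul_assoc,
        ((cAB i₂.val j₁.val).inv_left.symm).left_comm]
  -- g-components of powers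
  have gApow : ∀ i : ZMod 3, (A ^ i.val).g = ((i, 0), (0 : ZMod 2)) := by
    intro i
    rcases (show ∀ i : ZMod 3, i = 0 ∨ i = 1 ∨ i = 2 by decide) i with rfl | rfl | rfl
    · rw [show ((0:ZMod 3)).val = 0 from rfl, pow_zero, one_def]
      rfl
    · rw [show ((1:ZMod 3)).val = 1 from rfl, pow_one, hAg']
      rfl
    · rw [show ((2:ZMod 3)).val = 2 from rfl, pow_two, g_mul, hAg']
      decide
  have gBpow : ∀ j : ZMod 3, (B ^ j.val).g = ((0, j), (0 : ZMod 2)) := by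
    intro j
    rcases (show ∀ i : ZMod 3, i = 0 ∨ i = 1 ∨ i = 2 by decide) j with rfl | rfl | rfl
    · rw [show ((0:ZMod 3)).val = 0 from rfl, pow_zero, one_def]
      rfl
    · rw [show ((1:ZMod 3)).val = 1 from rfl, pow_one, hBg']
      rfl
    · rw [show ((2:ZMod 3)).val = 2 from rfl, pow_two, g_mul, hBg']
      decide
  have gSpow : ∀ k : ZMod 2, (σ ^ k.val).g = ((0, 0), k) := by
    intro k
    rcases (show ∀ k : ZMod 2, k = 0 ∨ k = 1 by decide) k with rfl | rfl
    · rw [show ((0:ZMod 2)).val = 0 from rfl, pow_zero, one_def]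
      rfl
    · rw [show ((1:ZMod 2)).val = 1 from rfl, pow_one, hσg']
      rfl
  have gPhi : ∀ w : Gam, (A ^ w.1.1.val * B ^ w.1.2.val * σ ^ w.2.val).g = w := by
    intro w
    rw [g_mul, g_mul, gApow, gBpow, gSpow]
    exact gphi w.1.1 w.1.2 w.2
  -- conclude
  refine ⟨fun x => ((A ^ x.1.1.val * B ^ x.1.2.val * σ ^ x.2.val).u)⁻¹, ?_⟩
  intro x y
  have hu : (A ^ (gammaMul x y).1.1.val * B ^ (gammaMul x y).1.2.val
        * σ ^ (gammaMul x y).2.val).u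
      = (A ^ x.1.1.val * B ^ x.1.2.val * σ ^ x.2.val).u
        * (A ^ y.1.1.val * B ^ y.1.2.val * σ ^ y.2.val).u * ν x y := by
    rw [hom x y, mul_def (A ^ x.1.1.val * B ^ x.1.2.val * σ ^ x.2.val)
      (A ^ y.1.1.val * B ^ y.1.2.val * σ ^ y.2.val), gPhi x, gPhi y]
  beta_reduce
  rw [hu]
  ext
  push_cast
  field_simp

lemma habba : gammaMul aaG bbG = gammaMul bbG aaG := by decide

lemma omega_ab (n : ℤ) : omegaGamma n aaG bbG = zeta3 ^ n := by
  show zeta3 ^ (n * (((1:ZMod 3)).val:ℤ) * (((1:ZMod 3)).val:ℤ)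
    * (-1:ℤ) ^ ((0:ZMod 2)).val) = zeta3 ^ n
  rw [show ((((1:ZMod 3)).val:ℤ)) = 1 from rfl, show ((0:ZMod 2)).val = 0 from rfl]
  norm_num

lemma omega_ba (n : ℤ) : omegaGamma n bbG aaG = 1 := by
  show zeta3 ^ (n * (((0:ZMod 3)).val:ℤ) * (((0:ZMod 3)).val:ℤ)
    * (-1:ℤ) ^ ((0:ZMod 2)).val) = 1
  rw [show ((((0:ZMod 3)).val:ℤ)) = 0 from rfl]
  norm_num

lemma omega_gone_left (n : ℤ) (x : Gam) : omegaGamma n gone x = 1 := by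
  show zeta3 ^ (n * (((0:ZMod 3)).val:ℤ) * ((x.1.2.val):ℤ) * (-1:ℤ) ^ ((0:ZMod 2)).val) = 1
  rw [show ((((0:ZMod 3)).val:ℤ)) = 0 from rfl]
  norm_num

lemma omega_gone_right (n : ℤ) (x : Gam) : omegaGamma n x gone = 1 := by
  show zeta3 ^ (n * ((x.1.1.val):ℤ) * (((0:ZMod 3)).val:ℤ) * (-1:ℤ) ^ x.2.val) = 1
  rw [show ((((0:ZMod 3)).val:ℤ)) = 0 from rfl]
  norm_num

/-- `ω₁` is not a 2-coboundary on `Γ = (ℤ/3 × ℤ/3) ⋊ ℤ/2`, and every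
2-cocycle on `Γ` with values in `ℂˣ` is cohomologous to `ω_n` for some
`n ∈ {0,1,2}` (i.e. `H²(Γ, U(1)) ≅ ℤ₃`, generated by the class of `ω₁`). -/
theorem omegaGamma_generates_H2 :
    (¬ ∃ f : (ZMod 3 × ZMod 3) × ZMod 2 → ℂˣ,
        ∀ x y, omegaGamma 1 x y = f x * f y * (f (gammaMul x y))⁻¹) ∧
    (∀ ν : ((ZMod 3 × ZMod 3) × ZMod 2) → ((ZMod 3 × ZMod 3) × ZMod 2) → ℂˣ,
      (∀ x y z, ν x y * ν (gammaMul x y) z = ν x (gammaMul y z) * ν y z) →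
      ∃ n ∈ ({0, 1, 2} : Set ℤ), ∃ f : (ZMod 3 × ZMod 3) × ZMod 2 → ℂˣ,
        ∀ x y, ν x y = omegaGamma n x y * (f x * f y * (f (gammaMul x y))⁻¹)) := by
  constructor
  · rintro ⟨f, hf⟩
    have h1 := hf aaG bbG
    have h2 := hf bbG aaG
    rw [habba] at h1
    have h3 : omegaGamma 1 aaG bbG = omegaGamma 1 bbG aaG := by
      rw [h1, h2, mul_comm (f bbG) (f aaG)]
    rw [omega_ab, omega_ba, zpow_one] at h3
    exact zeta3_ne_one h3
  · intro ν hc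
    set c₀ := ν gone gone with hc₀
    have hν1 : ∀ x, ν gone x = c₀ := by
      intro x
      have e := hc gone gone x
      simp only [gone_mul] at e
      exact (mul_right_cancel e).symm
    have hν2 : ∀ x, ν x gone = c₀ := by
      intro x
      have e := hc x gone gone
      simp only [gmul_one, gone_mul] at e
      exact mul_left_cancel e
    -- normalized cocycle ν₁
    set ν₁ : Gam → Gam → ℂˣ := fun x y => ν x y * c₀⁻¹ with hν₁def
    have hc1 : ∀ x y z, ν₁ x y * ν₁ (gammaMul x y) z = ν₁ x (gammaMul y z) * ν₁ y z := by
      intro x y z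
      show (ν x y * c₀⁻¹) * (ν (gammaMul x y) z * c₀⁻¹)
        = (ν x (gammaMul y z) * c₀⁻¹) * (ν y z * c₀⁻¹)
      rw [mul_mul_mul_comm, hc x y z, mul_mul_mul_comm]
    have hn11 : ∀ x, ν₁ gone x = 1 := by
      intro x; show ν gone x * c₀⁻¹ = 1; rw [hν1, mul_inv_cancel]
    have hn12 : ∀ x, ν₁ x gone = 1 := by
      intro x; show ν x gone * c₀⁻¹ = 1; rw [hν2, mul_inv_cancel]
    obtain ⟨hlam3, -⟩ := main ν₁ hc1 hn11 hn12
    -- identify lam with a power of zeta3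
    have hzn : ∃ n ∈ ({0, 1, 2} : Set ℤ),
        ν₁ aaG bbG * (ν₁ bbG aaG)⁻¹ = zeta3 ^ n := by
      rcases cube_root_cases _ hlam3 with h | h | h
      · exact ⟨0, by norm_num, by rw [h, zpow_zero]⟩
      · exact ⟨1, by norm_num, by rw [h, zpow_one]⟩
      · exact ⟨2, by norm_num, by rw [h]; rw [show (2:ℤ) = ((2:ℕ):ℤ) by norm_num,
          zpow_natCast]⟩
    obtain ⟨n, hn, hz⟩ := hzn
    refine ⟨n, hn, ?_⟩
    -- twist by omegaGamma n
    set ν₂ : Gam → Gam → ℂˣ := fun x y => ν₁ x y * (omegaGamma n x y)⁻¹ with hν₂def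
    have hc2 : ∀ x y z, ν₂ x y * ν₂ (gammaMul x y) z = ν₂ x (gammaMul y z) * ν₂ y z := by
      intro x y z
      show (ν₁ x y * (omegaGamma n x y)⁻¹) * (ν₁ (gammaMul x y) z * (omegaGamma n (gammaMul x y) z)⁻¹)
        = (ν₁ x (gammaMul y z) * (omegaGamma n x (gammaMul y z))⁻¹) * (ν₁ y z * (omegaGamma n y z)⁻¹)
      rw [mul_mul_mul_comm, ← mul_inv, hc1 x y z, omega_cocycle n x y z, mul_inv,
        ← mul_mul_mul_comm]
    have hn21 : ∀ x, ν₂ gone x = 1 := by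
      intro x; show ν₁ gone x * (omegaGamma n gone x)⁻¹ = 1
      rw [hn11, omega_gone_left, inv_one, mul_one]
    have hn22 : ∀ x, ν₂ x gone = 1 := by
      intro x; show ν₁ x gone * (omegaGamma n x gone)⁻¹ = 1
      rw [hn12, omega_gone_right, inv_one, mul_one]
    have hl2 : ν₂ aaG bbG = ν₂ bbG aaG := by
      show ν₁ aaG bbG * (omegaGamma n aaG bbG)⁻¹ = ν₁ bbG aaG * (omegaGamma n bbG aaG)⁻¹
      rw [omega_ab, omega_ba, inv_one, mul_one, ← hz, mul_inv, inv_inv, ← mul_assoc,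
        mul_inv_cancel, one_mul]
    obtain ⟨-, hcb⟩ := main ν₂ hc2 hn21 hn22
    obtain ⟨f, hf⟩ := hcb hl2
    refine ⟨fun x => f x * c₀, ?_⟩
    intro x y
    have h := hf x y
    have h3 : ν x y = ν₂ x y * omegaGamma n x y * c₀ := by
      show ν x y = ν x y * c₀⁻¹ * (omegaGamma n x y)⁻¹ * omegaGamma n x y * c₀
      rw [mul_assoc (ν x y * c₀⁻¹), inv_mul_cancel, mul_one, mul_assoc, inv_mul_cancel,
        mul_one]
    rw [h3, h]
    ext
    push_cast
    field_simp
end Ext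
end

section
/- On the group ℤ/2 (written additively), the function ω_I(a,b,c) := (-1)^{a·b·c} (with integer representatives a,b,c ∈ {0,1}) is a 3-cocycle with values in ℂˣ, and it is not a 3-coboundary. -/
/-- The type-I 3-cocycle of `ℤ/2` (Levin–Gu SPT): `ω_I(a,b,c) = (-1)^{a·b·c}`. -/
noncomputable def omegaI (a b c : ZMod 2) : ℂˣ :=
  (-1 : ℂˣ) ^ (a.val * b.val * c.val)

/-- `ω_I` is a 3-cocycle on `ℤ/2` with values in `ℂˣ`, and it is not
a 3-coboundary. -/
theorem omegaI_is_three_cocycle_not_coboundary :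
    (∀ g h k l : ZMod 2,
      omegaI h k l * omegaI g (h + k) l * omegaI g h k =
        omegaI (g + h) k l * omegaI g h (k + l)) ∧
    ¬ ∃ c : ZMod 2 → ZMod 2 → ℂˣ, ∀ g h k : ZMod 2,
        omegaI g h k = c h k * c g (h + k) * (c (g + h) k)⁻¹ * (c g h)⁻¹ := by
  constructor
  · intro g h k l
    fin_cases g <;> fin_cases h <;> fin_cases k <;> fin_cases l <;>
      · apply Units.ext
        simp [omegaI, ZMod.val, Units.val_mul, Units.val_pow_eq_pow_val,
          show ((1 + 1 : Fin 2) : ℕ) = 0 from rfl]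
        all_goals erw [Fin.val_add]
        all_goals norm_num
  · rintro ⟨c, hc⟩
    have h1 := hc 1 1 0
    have h2 := hc 0 1 1
    have h3 := hc 1 1 1
    simp only [show ((1:ZMod 2)+1) = 0 from rfl, show ((0:ZMod 2)+1) = 1 from rfl,
      show ((1:ZMod 2)+0) = 1 from rfl] at h1 h2 h3
    have o1 : omegaI 1 1 0 = 1 := by
      simp [omegaI, show ZMod.val (0:ZMod 2) = 0 from rfl]
    have o2 : omegaI 0 1 1 = 1 := by
      simp [omegaI, show ZMod.val (0:ZMod 2) = 0 from rfl]
    have o3 : omegaI 1 1 1 = -1 := by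
      simp [omegaI, show ZMod.val (1:ZMod 2) = 1 from rfl]
    rw [o1] at h1
    rw [o2] at h2
    rw [o3] at h3
    -- h1 : 1 = c 1 0 * c 1 1 * (c 0 0)⁻¹ * (c 1 1)⁻¹
    rw [mul_right_comm, mul_inv_cancel_right] at h1
    have k1 : c 1 0 = c 0 0 := mul_inv_eq_one.mp h1.symm
    -- h2 : 1 = c 1 1 * c 0 0 * (c 1 1)⁻¹ * (c 0 1)⁻¹
    rw [mul_inv_cancel_comm] at h2
    have k2 : c 0 0 = c 0 1 := mul_inv_eq_one.mp h2.symm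
    -- h3 : -1 = c 1 1 * c 1 0 * (c 0 1)⁻¹ * (c 1 1)⁻¹
    rw [mul_right_comm (c 1 1 * c 1 0) ((c 0 1)⁻¹) ((c 1 1)⁻¹), mul_inv_cancel_comm, k1, k2] at h3
    simp only [mul_inv_cancel] at h3
    have : ((-1 : ℂˣ) : ℂ) = 1 := by rw [h3]; rfl
    norm_num at this
end

section
/- On the group G := ℤ/2 × ℤ/2 (written additively, g = (g⁽¹⁾, g⁽²⁾)), the function ω_II(g₁,g₂,g₃) := (-1)^{g₁⁽¹⁾·g₂⁽²⁾·g₃⁽²⁾} (with integer representatives in {0,1}) is a 3-cocycle with values in ℂˣ, and it is not a 3-coboundary. -/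
/-- The type-II 3-cocycle of `ℤ/2 × ℤ/2`:
`ω_II(g₁,g₂,g₃) = (-1)^{g₁⁽¹⁾·g₂⁽²⁾·g₃⁽²⁾}`. -/
noncomputable def omegaII (g₁ g₂ g₃ : ZMod 2 × ZMod 2) : ℂˣ :=
  (-1 : ℂˣ) ^ (g₁.1.val * g₂.2.val * g₃.2.val)

lemma negOnePow_key (a b : ℕ) (h : a % 2 = b % 2) : (-1 : ℂˣ) ^ a = (-1 : ℂˣ) ^ b := by
  ext
  push_cast
  rw [neg_one_pow_eq_pow_mod_two, h, ← neg_one_pow_eq_pow_mod_two]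

/-- `ω_II` is a 3-cocycle on `ℤ/2 × ℤ/2` with values in `ℂˣ`, and it
is not a 3-coboundary. -/
theorem omegaII_is_three_cocycle_not_coboundary :
    (∀ g h k l : ZMod 2 × ZMod 2,
      omegaII h k l * omegaII g (h + k) l * omegaII g h k =
        omegaII (g + h) k l * omegaII g h (k + l)) ∧
    ¬ ∃ c : (ZMod 2 × ZMod 2) → (ZMod 2 × ZMod 2) → ℂˣ,
        ∀ g h k : ZMod 2 × ZMod 2,
          omegaII g h k = c h k * c g (h + k) * (c (g + h) k)⁻¹ * (c g h)⁻¹ := by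
  constructor
  · intro g h k l
    unfold omegaII
    rw [← pow_add, ← pow_add, ← pow_add]
    apply negOnePow_key
    revert g h k l
    decide
  · rintro ⟨c, hc⟩
    set e : ZMod 2 × ZMod 2 := (1, 1) with he
    have h1 := hc e e e
    have h3 := hc e 0 e
    have hee : e + e = 0 := by decide
    have he0 : e + 0 = e := by decide
    have h0e : (0 : ZMod 2 × ZMod 2) + e = e := by decide
    rw [hee] at h1
    rw [he0, h0e] at h3
    have hω1 : omegaII e e e = -1 := by
      unfold omegaII
      norm_num [he, show ((1 : ZMod 2)).val = 1 from rfl]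
    have hω3 : omegaII e 0 e = 1 := by
      unfold omegaII
      norm_num [he, show ((0 : ZMod 2)).val = 0 from rfl]
    rw [hω1] at h1
    rw [hω3] at h3
    simp only [mul_inv_cancel_right] at h3
    have h3' : c e 0 = c 0 e := by
      have := mul_inv_eq_one.mp h3.symm
      exact this.symm
    rw [h3'] at h1
    have : (-1 : ℂˣ) = 1 := by
      rw [h1]
      group
    have : ((-1 : ℂˣ) : ℂ) = ((1 : ℂˣ) : ℂ) := by rw [this]
    norm_num at this
end

section
/- On the group G := ℤ/2 × ℤ/2 × ℤ/2 (written additively, g = (g⁽¹⁾, g⁽²⁾, g⁽³⁾)), the function ω_III(g₁,g₂,g₃) := (-1)^{g₁⁽¹⁾·g₂⁽²⁾·g₃⁽³⁾} (with integer representatives in {0,1}) is a 3-cocycle with values in ℂˣ, and it is not a 3-coboundary. -/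
/-- The type-III 3-cocycle of `ℤ/2 × ℤ/2 × ℤ/2`:
`ω_III(g₁,g₂,g₃) = (-1)^{g₁⁽¹⁾·g₂⁽²⁾·g₃⁽³⁾}`. -/
noncomputable def omegaIII (g₁ g₂ g₃ : ZMod 2 × ZMod 2 × ZMod 2) : ℂˣ :=
  (-1 : ℂˣ) ^ (g₁.1.val * g₂.2.1.val * g₃.2.2.val)

private lemma neg_one_pow_mod (m : ℕ) : ((-1 : ℂˣ)) ^ m = (-1) ^ (m % 2) := by
  conv_lhs => rw [← Nat.div_add_mod m 2]
  rw [pow_add, pow_mul]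
  norm_num

private lemma exp_eq : ∀ g h k l : ZMod 2 × ZMod 2 × ZMod 2,
    (h.1.val * k.2.1.val * l.2.2.val + g.1.val * (h + k).2.1.val * l.2.2.val
      + g.1.val * h.2.1.val * k.2.2.val) % 2 =
    ((g + h).1.val * k.2.1.val * l.2.2.val + g.1.val * h.2.1.val * (k + l).2.2.val) % 2 := by
  decide

/-- `ω_III` is a 3-cocycle on `ℤ/2 × ℤ/2 × ℤ/2` with values in `ℂˣ`,
and it is not a 3-coboundary. -/
theorem omegaIII_is_three_cocycle_not_coboundary :
    (∀ g h k l : ZMod 2 × ZMod 2 × ZMod 2,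
      omegaIII h k l * omegaIII g (h + k) l * omegaIII g h k =
        omegaIII (g + h) k l * omegaIII g h (k + l)) ∧
    ¬ ∃ c : (ZMod 2 × ZMod 2 × ZMod 2) → (ZMod 2 × ZMod 2 × ZMod 2) → ℂˣ,
        ∀ g h k : ZMod 2 × ZMod 2 × ZMod 2,
          omegaIII g h k = c h k * c g (h + k) * (c (g + h) k)⁻¹ * (c g h)⁻¹ := by
  constructor
  · intro g h k l
    simp only [omegaIII, ← pow_add]
    conv_lhs => rw [neg_one_pow_mod]
    conv_rhs => rw [neg_one_pow_mod]
    exact congrArg _ (exp_eq g h k l)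
  · rintro ⟨c, hc⟩
    set a : ZMod 2 × ZMod 2 × ZMod 2 := (1, 0, 0) with ha
    set b : ZMod 2 × ZMod 2 × ZMod 2 := (0, 1, 0) with hb
    set e : ZMod 2 × ZMod 2 × ZMod 2 := (0, 0, 1) with he
    have h1 := hc a b e
    have h2 := hc a e b
    have h3 := hc b e a
    have h4 := hc b a e
    have h5 := hc e a b
    have h6 := hc e b a
    have key : omegaIII a b e * omegaIII b e a * omegaIII e a b =
        omegaIII a e b * omegaIII b a e * omegaIII e b a := by
      rw [h1, h2, h3, h4, h5, h6, add_comm b a, add_comm e a, add_comm e b, Units.ext_iff]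
      push_cast
      field_simp
    have v1 : omegaIII a b e = -1 := by
      simp only [omegaIII, ha, hb, he]
      norm_num [show (ZMod.val (1 : ZMod 2)) = 1 from rfl]
    have v2 : omegaIII b e a = 1 := by
      simp only [omegaIII, hb]
      norm_num [show (ZMod.val (0 : ZMod 2)) = 0 from rfl]
    have v3 : omegaIII e a b = 1 := by
      simp only [omegaIII, he]
      norm_num [show (ZMod.val (0 : ZMod 2)) = 0 from rfl]
    have v4 : omegaIII a e b = 1 := by
      simp only [omegaIII, he]
      norm_num [show (ZMod.val (0 : ZMod 2)) = 0 from rfl]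
    have v5 : omegaIII b a e = 1 := by
      simp only [omegaIII, hb]
      norm_num [show (ZMod.val (0 : ZMod 2)) = 0 from rfl]
    have v6 : omegaIII e b a = 1 := by
      simp only [omegaIII, he, ha]
      norm_num [show (ZMod.val (0 : ZMod 2)) = 0 from rfl]
    rw [v1, v2, v3, v4, v5, v6] at key
    norm_num at key
end

section
/- Let G be a commutative group and ω : G × G × G → ℂˣ a 3-cocycle. Then for every A ∈ G, the slant product c_A : G × G → ℂˣ defined by c_A(B,C) := ω(A,B,C) · ω(B,C,A) · ω(B,A,C)⁻¹ is a 2-cocycle on G with values in ℂˣ, i.e. c_A(B,C)·c_A(B·C,D) = c_A(B,C·D)·c_A(C,D) for all B,C,D ∈ G. -/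
/-- for a commutative group `G` and a 3-cocycle `ω`, the slant
product `c_A(B,C) := ω(A,B,C)·ω(B,C,A)·ω(B,A,C)⁻¹` is a 2-cocycle on `G` for
every `A ∈ G`. -/
theorem slant_product_of_three_cocycle_is_two_cocycle
    {G : Type*} [CommGroup G] (ω : G → G → G → ℂˣ)
    (hω : ∀ g h k l : G,
      ω h k l * ω g (h * k) l * ω g h k = ω (g * h) k l * ω g h (k * l)) :
    ∀ A B C D : G,
      (ω A B C * ω B C A * (ω B A C)⁻¹) *
        (ω A (B * C) D * ω (B * C) D A * (ω (B * C) A D)⁻¹) =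
      (ω A B (C * D) * ω B (C * D) A * (ω B A (C * D))⁻¹) *
        (ω A C D * ω C D A * (ω C A D)⁻¹) := by
  intro A B C D
  have h1 := hω A B C D
  have h2 := hω B A C D
  have h3 := hω B C A D
  have h4 := hω B C D A
  rw [mul_comm B A] at h2
  rw [mul_comm C A, mul_comm A D] at h3
  -- solve each 3-cocycle instance for one atom appearing in the goal
  have e1 : ω A B (C * D) = (ω B C D * ω A (B * C) D * ω A B C) * (ω (A * B) C D)⁻¹ := by
    rw [eq_mul_inv_iff_mul_eq, mul_comm]; exact h1.symm
  have e2 : ω B A (C * D) = (ω A C D * ω B (A * C) D * ω B A C) * (ω (A * B) C D)⁻¹ := by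
    rw [eq_mul_inv_iff_mul_eq, mul_comm]; exact h2.symm
  have e3 : ω (B * C) A D = (ω C A D * ω B (A * C) D * ω B C A) * (ω B C (D * A))⁻¹ := by
    rw [eq_mul_inv_iff_mul_eq]; exact h3.symm
  have e4 : ω (B * C) D A = (ω C D A * ω B (C * D) A * ω B C D) * (ω B C (D * A))⁻¹ := by
    rw [eq_mul_inv_iff_mul_eq]; exact h4.symm
  rw [e1, e2, e3, e4]
  rw [Units.ext_iff]
  push_cast [Units.val_mul, Units.val_inv_eq_inv_val]
  field_simp
end
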